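/- arXiv:2307.06817 — 6 statements merged into one kernel-verified Lean document; each statement's English description precedes it below -/
import Mathlib

section
/- Let α > 0, β > 0, λ > 0. Let X and Y be independent random variables on a probability space, each almost surely positive, where X has the Gamma(α,λ) density f_X(x) = λ^α * x^{α-1} * exp(-λ*x) / Γ(α) and Y has the Gamma(β,λ) density f_Y(y) = λ^β * y^{β-1} * exp(-λ*y) / Γ(β). Then Z = X/(X+Y) has the Beta(α,β) density f_Z(z) = z^{α-1} * (1-z)^{β-1} / B(α,β) for z ∈ (0,1). -/
open MeasureTheory ProbabilityTheory Real Set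
open scoped ENNReal

namespace GammaRatioAux

lemma gamma_lint {a r : ℝ} (ha : 0 < a) (hr : 0 < r) :
    ∫⁻ s in Ioi (0:ℝ), ENNReal.ofReal (r ^ a * s ^ (a - 1) * Real.exp (-(r * s)))
      = ENNReal.ofReal (Real.Gamma a) := by
  have h1 : ∫⁻ s in Ioi (0:ℝ), gammaPDF a r s = 1 := by
    have htot := lintegral_gammaPDF_eq_one ha hr
    have hleft : ∫⁻ x in Iio (0:ℝ), gammaPDF a r x = 0 :=
      lintegral_gammaPDF_of_nonpos le_rfl
    have hsplit := lintegral_add_compl (μ := volume) (gammaPDF a r)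
      (measurableSet_Iio (a := (0:ℝ)))
    rw [compl_Iio, hleft, zero_add, htot] at hsplit
    rw [setLIntegral_congr Ioi_ae_eq_Ici, hsplit]
  calc ∫⁻ s in Ioi (0:ℝ), ENNReal.ofReal (r ^ a * s ^ (a - 1) * Real.exp (-(r * s)))
      = ∫⁻ s in Ioi (0:ℝ), ENNReal.ofReal (Real.Gamma a) * gammaPDF a r s := by
        refine setLIntegral_congr_fun measurableSet_Ioi (fun s hs => ?_)
        rw [gammaPDF_of_nonneg (le_of_lt hs),
          ← ENNReal.ofReal_mul (Real.Gamma_pos_of_pos ha).le]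
        congr 1
        field_simp
    _ = ENNReal.ofReal (Real.Gamma a) * ∫⁻ s in Ioi (0:ℝ), gammaPDF a r s :=
        lintegral_const_mul _ ((measurable_gammaPDFReal a r).ennreal_ofReal)
    _ = ENNReal.ofReal (Real.Gamma a) := by rw [h1, mul_one]

noncomputable def Bmap (p : ℝ × ℝ) : ℝ × ℝ →L[ℝ] ℝ × ℝ :=
  LinearMap.toContinuousLinearMap (Matrix.toLin (Module.Basis.finTwoProd ℝ) (Module.Basis.finTwoProd ℝ)
    !![p.2, p.1; -p.2, 1 - p.1])

lemma hasFDerivAt_T (p : ℝ × ℝ) :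
    HasFDerivAt (fun q : ℝ × ℝ => (q.1 * q.2, (1 - q.1) * q.2)) (Bmap p) p := by
  unfold Bmap
  rw [Matrix.toLin_finTwoProd_toContinuousLinearMap]
  have h1 : HasFDerivAt (fun q : ℝ × ℝ => q.1 * q.2)
      (p.1 • ContinuousLinearMap.snd ℝ ℝ ℝ + p.2 • ContinuousLinearMap.fst ℝ ℝ ℝ) p :=
    hasFDerivAt_fst.mul hasFDerivAt_snd
  have h2 : HasFDerivAt (fun q : ℝ × ℝ => (1 - q.1) * q.2)
      ((1 - p.1) • ContinuousLinearMap.snd ℝ ℝ ℝ +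
        p.2 • ((0 : ℝ × ℝ →L[ℝ] ℝ) - ContinuousLinearMap.fst ℝ ℝ ℝ)) p :=
    ((hasFDerivAt_const (1:ℝ) p).sub hasFDerivAt_fst).mul hasFDerivAt_snd
  refine (h1.prodMk h2).congr_fderiv ?_
  refine ContinuousLinearMap.ext fun q => Prod.ext ?_ ?_
  · simp
    ring
  · simp
    ring

lemma Bmap_det (p : ℝ × ℝ) : (Bmap p).det = p.2 := by
  simp only [Bmap, LinearMap.det_toContinuousLinearMap, LinearMap.det_toLin,
    Matrix.det_fin_two_of]
  ring

lemma T_image : (fun q : ℝ × ℝ => (q.1 * q.2, (1 - q.1) * q.2)) '' (Ioo (0:ℝ) 1 ×ˢ Ioi (0:ℝ))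
    = Ioi (0:ℝ) ×ˢ Ioi (0:ℝ) := by
  ext p
  constructor
  · rintro ⟨⟨z, s⟩, ⟨hz, hs⟩, rfl⟩
    simp only [mem_Ioo, mem_Ioi] at hz hs ⊢
    exact ⟨mul_pos hz.1 hs, mul_pos (by linarith [hz.2]) hs⟩
  · obtain ⟨x, y⟩ := p
    rintro ⟨hx, hy⟩
    simp only [mem_Ioi] at hx hy
    have hxy : 0 < x + y := by linarith
    refine ⟨(x / (x + y), x + y), ⟨⟨by positivity, by rw [div_lt_one hxy]; linarith⟩, hxy⟩, ?_⟩
    have h2 : (1 - x / (x + y)) = y / (x + y) := by field_simp; ring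
    simp only [h2]
    ext <;> simp <;> field_simp

lemma T_injOn : InjOn (fun q : ℝ × ℝ => (q.1 * q.2, (1 - q.1) * q.2))
    (Ioo (0:ℝ) 1 ×ˢ Ioi (0:ℝ)) := by
  rintro ⟨z1, s1⟩ ⟨hz1, hs1⟩ ⟨z2, s2⟩ ⟨hz2, hs2⟩ h
  simp only [Prod.mk.injEq] at h
  obtain ⟨h1, h2⟩ := h
  have hs : s1 = s2 := by linear_combination h1 + h2
  subst hs
  have hz : z1 = z2 := mul_right_cancel₀ (ne_of_gt hs1) h1
  simp [hz]

lemma cov (g : ℝ × ℝ → ℝ≥0∞) :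
    ∫⁻ p in Ioi (0:ℝ) ×ˢ Ioi (0:ℝ), g p
      = ∫⁻ p in Ioo (0:ℝ) 1 ×ˢ Ioi (0:ℝ),
          ENNReal.ofReal p.2 * g (p.1 * p.2, (1 - p.1) * p.2) := by
  rw [← T_image, lintegral_image_eq_lintegral_abs_det_fderiv_mul volume
    (measurableSet_Ioo.prod measurableSet_Ioi)
    (fun p _ => (hasFDerivAt_T p).hasFDerivWithinAt) T_injOn g]
  refine setLIntegral_congr_fun (measurableSet_Ioo.prod measurableSet_Ioi)
    (fun p hp => ?_)
  rw [Bmap_det, abs_of_pos hp.2]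

end GammaRatioAux

theorem gamma_ratio_beta
    {Ω : Type*} [MeasurableSpace Ω] (P : Measure Ω) [IsProbabilityMeasure P]
    (α β lam : ℝ) (hα : 0 < α) (hβ : 0 < β) (hlam : 0 < lam)
    (X Y : Ω → ℝ) (hXm : Measurable X) (hYm : Measurable Y)
    (hindep : IndepFun X Y P)
    (hXpos : ∀ᵐ ω ∂P, 0 < X ω) (hYpos : ∀ᵐ ω ∂P, 0 < Y ω)
    (hX : P.map X = (volume.restrict (Ioi 0)).withDensity
      (fun x => ENNReal.ofReal (lam ^ α * x ^ (α - 1) * Real.exp (-(lam * x)) /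
        Real.Gamma α)))
    (hY : P.map Y = (volume.restrict (Ioi 0)).withDensity
      (fun y => ENNReal.ofReal (lam ^ β * y ^ (β - 1) * Real.exp (-(lam * y)) /
        Real.Gamma β))) :
    P.map (fun ω => X ω / (X ω + Y ω)) = (volume.restrict (Ioo 0 1)).withDensity
      (fun z => ENNReal.ofReal (z ^ (α - 1) * (1 - z) ^ (β - 1) /
        (Real.Gamma α * Real.Gamma β / Real.Gamma (α + β)))) := by
  classical
  set f : ℝ → ℝ≥0∞ := fun x => ENNReal.ofReal
    (lam ^ α * x ^ (α - 1) * Real.exp (-(lam * x)) / Real.Gamma α) with hf_def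
  set g : ℝ → ℝ≥0∞ := fun y => ENNReal.ofReal
    (lam ^ β * y ^ (β - 1) * Real.exp (-(lam * y)) / Real.Gamma β) with hg_def
  have hfm : Measurable f := by
    apply Measurable.ennreal_ofReal
    fun_prop
  have hgm : Measurable g := by
    apply Measurable.ennreal_ofReal
    fun_prop
  have hφm : Measurable (fun p : ℝ × ℝ => p.1 / (p.1 + p.2)) :=
    measurable_fst.div (measurable_fst.add measurable_snd)
  -- step 1: joint law
  have hprod : (P.map X).prod (P.map Y)
      = (volume.restrict (Ioi (0:ℝ) ×ˢ Ioi (0:ℝ))).withDensity (fun p => f p.1 * g p.2) := by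
    refine Measure.prod_eq fun s t hs ht => ?_
    rw [withDensity_apply _ (hs.prod ht), Measure.restrict_restrict (hs.prod ht),
      Set.prod_inter_prod, Measure.volume_eq_prod, ← Measure.prod_restrict,
      lintegral_prod_mul hfm.aemeasurable hgm.aemeasurable,
      hX, hY, withDensity_apply _ hs, withDensity_apply _ ht,
      Measure.restrict_restrict hs, Measure.restrict_restrict ht]
  have hmap : P.map (fun ω => X ω / (X ω + Y ω))
      = ((P.map X).prod (P.map Y)).map (fun p : ℝ × ℝ => p.1 / (p.1 + p.2)) := by
    rw [← (indepFun_iff_map_prod_eq_prod_map_map hXm.aemeasurable hYm.aemeasurable).mp hindep,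
      Measure.map_map hφm (hXm.prodMk hYm)]
    rfl
  rw [hmap, hprod]
  -- shorthand densities on the target side
  set F : ℝ → ℝ≥0∞ := fun z => ENNReal.ofReal
    (z ^ (α - 1) * (1 - z) ^ (β - 1) / (Real.Gamma α * Real.Gamma β)) with hF_def
  set G : ℝ → ℝ≥0∞ := fun s => ENNReal.ofReal
    (lam ^ (α + β) * s ^ (α + β - 1) * Real.exp (-(lam * s))) with hG_def
  have hFm : Measurable F := by
    apply Measurable.ennreal_ofReal
    fun_prop
  have hGm : Measurable G := by
    apply Measurable.ennreal_ofReal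
    fun_prop
  ext A hA
  rw [Measure.map_apply hφm hA, withDensity_apply _ (hφm hA), withDensity_apply _ hA,
    Measure.restrict_restrict (hφm hA), Measure.restrict_restrict hA]
  set D : ℝ × ℝ → ℝ≥0∞ := fun p => f p.1 * g p.2 with hD_def
  have hΓα := Real.Gamma_pos_of_pos hα
  have hΓβ := Real.Gamma_pos_of_pos hβ
  have hΓαβ := Real.Gamma_pos_of_pos (by linarith : (0:ℝ) < α + β)
  calc ∫⁻ p in ((fun p : ℝ × ℝ => p.1 / (p.1 + p.2)) ⁻¹' A) ∩ (Ioi 0 ×ˢ Ioi 0), D p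
      = ∫⁻ p in Ioi (0:ℝ) ×ˢ Ioi (0:ℝ),
          ((fun p : ℝ × ℝ => p.1 / (p.1 + p.2)) ⁻¹' A).indicator D p := by
        rw [lintegral_indicator (hφm hA), Measure.restrict_restrict (hφm hA)]
    _ = ∫⁻ p in Ioo (0:ℝ) 1 ×ˢ Ioi (0:ℝ), ENNReal.ofReal p.2 *
          ((fun p : ℝ × ℝ => p.1 / (p.1 + p.2)) ⁻¹' A).indicator D
            (p.1 * p.2, (1 - p.1) * p.2) := GammaRatioAux.cov _
    _ = ∫⁻ p in Ioo (0:ℝ) 1 ×ˢ Ioi (0:ℝ), A.indicator F p.1 * G p.2 := by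
        refine setLIntegral_congr_fun (measurableSet_Ioo.prod measurableSet_Ioi)
          (fun p hp => ?_)
        obtain ⟨⟨hz0, hz1⟩, hs0⟩ : (0 < p.1 ∧ p.1 < 1) ∧ 0 < p.2 := by
          simpa [Set.mem_prod, mem_Ioo, mem_Ioi] using hp
        have hsum : p.1 * p.2 + (1 - p.1) * p.2 = p.2 := by ring
        have hφT : (p.1 * p.2) / ((p.1 * p.2) + ((1 - p.1) * p.2)) = p.1 := by
          rw [hsum, mul_div_cancel_right₀ _ (ne_of_gt hs0)]
        by_cases hzA : p.1 ∈ A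
        · rw [Set.indicator_of_mem (by simpa [Set.mem_preimage, hφT] using hzA),
            Set.indicator_of_mem hzA]
          simp only [hD_def, hf_def, hg_def, hF_def, hG_def]
          have ha : (0:ℝ) ≤ lam ^ α * (p.1 * p.2) ^ (α - 1) *
              Real.exp (-(lam * (p.1 * p.2))) / Real.Gamma α :=
            div_nonneg (mul_nonneg (mul_nonneg (Real.rpow_nonneg hlam.le _)
              (Real.rpow_nonneg (mul_nonneg hz0.le hs0.le) _)) (Real.exp_nonneg _)) hΓα.le
          have hc : (0:ℝ) ≤ p.1 ^ (α - 1) * (1 - p.1) ^ (β - 1) /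
              (Real.Gamma α * Real.Gamma β) :=
            div_nonneg (mul_nonneg (Real.rpow_nonneg hz0.le _)
              (Real.rpow_nonneg (by linarith) _)) (mul_nonneg hΓα.le hΓβ.le)
          rw [← ENNReal.ofReal_mul ha, ← ENNReal.ofReal_mul hs0.le,
            ← ENNReal.ofReal_mul hc]
          congr 1
          have e1 : (p.1 * p.2) ^ (α - 1) = p.1 ^ (α - 1) * p.2 ^ (α - 1) :=
            Real.mul_rpow hz0.le hs0.le
          have e2 : ((1 - p.1) * p.2) ^ (β - 1) = (1 - p.1) ^ (β - 1) * p.2 ^ (β - 1) :=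
            Real.mul_rpow (by linarith) hs0.le
          have e3 : lam ^ (α + β) = lam ^ α * lam ^ β := Real.rpow_add hlam α β
          have e4 : p.2 ^ (α + β - 1) = p.2 ^ (α - 1) * p.2 ^ (β - 1) * p.2 := by
            have h' : α + β - 1 = (α - 1) + (β - 1) + 1 := by ring
            rw [h', Real.rpow_add hs0, Real.rpow_add hs0, Real.rpow_one]
          have e5 : Real.exp (-(lam * (p.1 * p.2))) * Real.exp (-(lam * ((1 - p.1) * p.2)))
              = Real.exp (-(lam * p.2)) := by
            rw [← Real.exp_add]
            congr 1
            ring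
          rw [e1, e2, e3, e4, ← e5]
          field_simp
        · rw [Set.indicator_of_notMem (by simpa [Set.mem_preimage, hφT] using hzA),
            Set.indicator_of_notMem hzA]
          simp
    _ = (∫⁻ z in Ioo (0:ℝ) 1, A.indicator F z) * ∫⁻ s in Ioi (0:ℝ), G s := by
        rw [Measure.volume_eq_prod, ← Measure.prod_restrict,
          lintegral_prod_mul (hFm.indicator hA).aemeasurable hGm.aemeasurable]
    _ = ∫⁻ z in Ioo (0:ℝ) 1, A.indicator F z * ENNReal.ofReal (Real.Gamma (α + β)) := by
        rw [GammaRatioAux.gamma_lint (by linarith) hlam,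
          lintegral_mul_const _ (hFm.indicator hA)]
    _ = ∫⁻ z in Ioo (0:ℝ) 1, A.indicator (fun z => ENNReal.ofReal
          (z ^ (α - 1) * (1 - z) ^ (β - 1) /
            (Real.Gamma α * Real.Gamma β / Real.Gamma (α + β)))) z := by
        refine lintegral_congr fun z => ?_
        by_cases hzA : z ∈ A
        · rw [Set.indicator_of_mem hzA, Set.indicator_of_mem hzA, hF_def,
            ← ENNReal.ofReal_mul' hΓαβ.le]
          congr 1
          rw [div_div_eq_mul_div, div_mul_eq_mul_div]
        · simp [hzA]
    _ = ∫⁻ z in A ∩ Ioo (0:ℝ) 1, ENNReal.ofReal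
          (z ^ (α - 1) * (1 - z) ^ (β - 1) /
            (Real.Gamma α * Real.Gamma β / Real.Gamma (α + β))) := by
        rw [lintegral_indicator hA, Measure.restrict_restrict hA]
end

section
/- Let c > 0, β > 0, λ > 0. Let X and Y be independent random variables on a probability space, each almost surely positive, where X has the weighted Lindley density f_X(x) = (β^{c+1}/((β+c)*Γ(c))) * x^{c-1} * (1+x) * exp(-β*x) for x > 0, and Y has the exponential density f_Y(y) = λ * exp(-λ*y) for y > 0. Then Z = X/(X+Y) has density, for z ∈ (0,1), f_Z(z) = (λ*β^{c+1}/((β+c)*Γ(c))) * (1/z^2) * [ Γ(c+1) * (λ*(1/z - 1) + β)^{-(c+1)} + Γ(c+2) * (λ*(1/z - 1) + β)^{-(c+2)} ]. -/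
open MeasureTheory ProbabilityTheory Real Set Filter
open scoped Topology ENNReal


lemma wler_expTail {lam : ℝ} (hlam : 0 < lam) {s : ℝ} (hs : 0 < s) :
    ((volume.restrict (Ioi 0)).withDensity
      (fun y => ENNReal.ofReal (lam * Real.exp (-(lam * y))))) (Ici s)
      = ENNReal.ofReal (Real.exp (-(lam * s))) := by
  have hIci : Ici s ∩ Ioi (0:ℝ) = Ici s :=
    inter_eq_left.mpr (fun y hy => lt_of_lt_of_le hs hy)
  rw [withDensity_apply _ measurableSet_Ici, Measure.restrict_restrict measurableSet_Ici, hIci]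
  have hint : IntegrableOn (fun y : ℝ => lam * Real.exp (-(lam * y))) (Ici s) := by
    rw [integrableOn_Ici_iff_integrableOn_Ioi]
    exact IntegrableOn.congr_fun ((exp_neg_integrableOn_Ioi s hlam).const_mul lam)
      (fun x _ => by ring_nf) measurableSet_Ioi
  rw [← ofReal_integral_eq_lintegral_ofReal hint
    (Eventually.of_forall fun y => by positivity)]
  congr 1
  rw [show (Ici s : Set ℝ) = Ici s from rfl]
  rw [MeasureTheory.integral_Ici_eq_integral_Ioi]
  have hderiv : ∀ x ∈ Ioi s, HasDerivAt (fun y : ℝ => -Real.exp (-(lam * y)))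
      (lam * Real.exp (-(lam * x))) x := by
    intro x _
    have := (((hasDerivAt_id x).const_mul lam).neg).exp.neg
    simpa [mul_comm, Pi.neg_def] using this
  have hint' : IntegrableOn (fun y : ℝ => lam * Real.exp (-(lam * y))) (Ioi s) :=
    hint.mono Ioi_subset_Ici_self le_rfl
  have htend : Tendsto (fun y : ℝ => -Real.exp (-(lam * y))) atTop (𝓝 (-0)) := by
    refine Tendsto.neg ?_
    refine Real.tendsto_exp_atBot.comp ?_
    have h0 : Tendsto (fun y : ℝ => lam * y) atTop atTop :=
      Tendsto.const_mul_atTop hlam tendsto_id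
    exact tendsto_neg_atTop_atBot.comp h0
  have hcont : ContinuousWithinAt (fun y : ℝ => -Real.exp (-(lam * y))) (Ici s) s :=
    (Continuous.continuousWithinAt (by continuity))
  rw [integral_Ioi_of_hasDerivAt_of_tendsto hcont hderiv hint' (by simpa using htend)]
  simp

lemma wler_wlIntegrable {c u : ℝ} (hc : 0 < c) (hu : 0 < u) :
    IntegrableOn (fun x : ℝ => x ^ (c - 1) * (1 + x) * Real.exp (-(u * x))) (Ioi 0) := by
  have h1 : IntegrableOn (fun x : ℝ => x ^ (c - 1) * Real.exp (-u * x)) (Ioi 0) := by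
    have := integrableOn_rpow_mul_exp_neg_mul_rpow (p := 1) (s := c - 1) (b := u)
      (by linarith) one_pos hu
    refine this.congr_fun (fun x hx => ?_) measurableSet_Ioi
    simp only [Real.rpow_one]
  have h2 : IntegrableOn (fun x : ℝ => x ^ c * Real.exp (-u * x)) (Ioi 0) := by
    have := integrableOn_rpow_mul_exp_neg_mul_rpow (p := 1) (s := c) (b := u)
      (by linarith) one_pos hu
    refine this.congr_fun (fun x hx => ?_) measurableSet_Ioi
    simp only [Real.rpow_one]
  refine IntegrableOn.congr_fun (h1.add h2) (fun x hx => ?_) measurableSet_Ioi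
  have hx0 : (0:ℝ) < x := hx
  have hxx : x ^ (c - 1) * x = x ^ c := by
    rw [← Real.rpow_add_one hx0.ne' (c-1)]; ring_nf
  simp only [Pi.add_apply, neg_mul]
  linear_combination -Real.exp (-(u*x)) * hxx

lemma wler_wlIntegral {c u : ℝ} (hc : 0 < c) (hu : 0 < u) :
    ∫ x in Ioi (0:ℝ), x ^ (c - 1) * (1 + x) * Real.exp (-(u * x))
      = Real.Gamma c * (1/u) ^ c + Real.Gamma (c+1) * (1/u) ^ (c+1) := by
  have h1 : IntegrableOn (fun x : ℝ => x ^ (c - 1) * Real.exp (-(u * x))) (Ioi 0) := by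
    have := integrableOn_rpow_mul_exp_neg_mul_rpow (p := 1) (s := c - 1) (b := u)
      (by linarith) one_pos hu
    refine IntegrableOn.congr_fun this (fun x hx => ?_) measurableSet_Ioi
    rw [Real.rpow_one, neg_mul]
  have h2 : IntegrableOn (fun x : ℝ => x ^ c * Real.exp (-(u * x))) (Ioi 0) := by
    have := integrableOn_rpow_mul_exp_neg_mul_rpow (p := 1) (s := c) (b := u)
      (by linarith) one_pos hu
    refine IntegrableOn.congr_fun this (fun x hx => ?_) measurableSet_Ioi
    rw [Real.rpow_one, neg_mul]
  have hsplit : ∫ x in Ioi (0:ℝ), x ^ (c - 1) * (1 + x) * Real.exp (-(u * x))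
      = (∫ x in Ioi (0:ℝ), x ^ (c - 1) * Real.exp (-(u * x)))
        + ∫ x in Ioi (0:ℝ), x ^ c * Real.exp (-(u * x)) := by
    rw [← integral_add h1 h2]
    refine setIntegral_congr_fun measurableSet_Ioi (fun x hx => ?_)
    have hx0 : (0:ℝ) < x := hx
    have hxx : x ^ (c - 1) * x = x ^ c := by
      rw [← Real.rpow_add_one hx0.ne' (c-1)]; ring_nf
    linear_combination Real.exp (-(u*x)) * hxx
  rw [hsplit, integral_rpow_mul_exp_neg_mul_Ioi hc hu]
  rw [show (fun x : ℝ => x ^ c * Real.exp (-(u * x)))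
      = (fun x : ℝ => x ^ ((c+1) - 1) * Real.exp (-(u * x))) by
    funext x; rw [add_sub_cancel_right]]
  rw [integral_rpow_mul_exp_neg_mul_Ioi (by linarith) hu]
  ring



noncomputable def wlerF (c β lam : ℝ) (z : ℝ) : ℝ :=
  β ^ (c+1) / ((β + c) * Real.Gamma c) *
    (Real.Gamma c * (lam * (1/z - 1) + β) ^ (-c)
      + Real.Gamma (c+1) * (lam * (1/z - 1) + β) ^ (-(c+1)))

noncomputable def wlerD (c β lam : ℝ) (z : ℝ) : ℝ :=
  lam * β ^ (c + 1) / ((β + c) * Real.Gamma c) * (1 / z ^ 2) *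
    (Real.Gamma (c + 1) * (lam * (1 / z - 1) + β) ^ (-(c + 1)) +
     Real.Gamma (c + 2) * (lam * (1 / z - 1) + β) ^ (-(c + 2)))

lemma wler_upos {lam β : ℝ} (hβ : 0 < β) (hlam : 0 < lam) {z : ℝ}
    (hz0 : 0 < z) (hz1 : z ≤ 1) : 0 < lam * (1/z - 1) + β := by
  have h1 : 1 ≤ 1/z := by rw [le_div_iff₀ hz0]; linarith
  nlinarith

lemma wler_D_nonneg {c β lam : ℝ} (hc : 0 < c) (hβ : 0 < β) (hlam : 0 < lam)
    {z : ℝ} (hz0 : 0 < z) (hz1 : z ≤ 1) : 0 ≤ wlerD c β lam z := by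
  have hu := wler_upos hβ hlam hz0 hz1
  have hΓ : 0 < Real.Gamma c := Real.Gamma_pos_of_pos hc
  have hΓ1 : 0 < Real.Gamma (c+1) := Real.Gamma_pos_of_pos (by linarith)
  have hΓ2 : 0 < Real.Gamma (c+2) := Real.Gamma_pos_of_pos (by linarith)
  unfold wlerD
  have h1 : (0:ℝ) ≤ (lam * (1/z - 1) + β) ^ (-(c+1)) := Real.rpow_nonneg hu.le _
  have h2 : (0:ℝ) ≤ (lam * (1/z - 1) + β) ^ (-(c+2)) := Real.rpow_nonneg hu.le _
  have hb : (0:ℝ) ≤ β ^ (c+1) := Real.rpow_nonneg hβ.le _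
  positivity

lemma wler_contOn {c β lam : ℝ} (hβ : 0 < β) (hlam : 0 < lam) {ε s : ℝ}
    (hε : 0 < ε) (hs : s ≤ 1) : ContinuousOn (wlerD c β lam) (Icc ε s) := by
  intro x hx
  have hx0 : 0 < x := lt_of_lt_of_le hε hx.1
  have hu := wler_upos hβ hlam hx0 (hx.2.trans hs)
  have hux : ContinuousAt (fun z : ℝ => lam * (1/z - 1) + β) x := by
    have : ContinuousAt (fun z : ℝ => 1/z) x :=
      ContinuousAt.div continuousAt_const continuousAt_id hx0.ne'
    exact (((this.sub continuousAt_const).const_smul lam).add continuousAt_const)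
  have h1 : ContinuousAt (fun z : ℝ => (lam * (1/z - 1) + β) ^ (-(c+1))) x :=
    hux.rpow_const (Or.inl hu.ne')
  have h2 : ContinuousAt (fun z : ℝ => (lam * (1/z - 1) + β) ^ (-(c+2))) x :=
    hux.rpow_const (Or.inl hu.ne')
  have h3 : ContinuousAt (fun z : ℝ => 1 / z ^ 2) x :=
    ContinuousAt.div continuousAt_const (continuousAt_id.pow 2) (by positivity)
  exact ((continuousAt_const.mul h3).mul
    ((continuousAt_const.mul h1).add (continuousAt_const.mul h2))).continuousWithinAt

lemma wler_hasDerivAt {c β lam : ℝ} (hc : 0 < c) (hβ : 0 < β) (hlam : 0 < lam)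
    {z : ℝ} (hz0 : 0 < z) (hz1 : z ≤ 1) :
    HasDerivAt (wlerF c β lam) (wlerD c β lam z) z := by
  have hz : z ≠ 0 := hz0.ne'
  have hu0 : 0 < lam * (1/z - 1) + β := wler_upos hβ hlam hz0 hz1
  have hu : HasDerivAt (fun z : ℝ => lam * (1/z - 1) + β) (lam * (-(z^2)⁻¹)) z := by
    simpa using (((hasDerivAt_inv hz).sub_const 1).const_mul lam).add_const β
  have hpow1 : HasDerivAt (fun z : ℝ => (lam * (1/z - 1) + β) ^ (-c))
      ((lam * (-(z^2)⁻¹)) * (-c) * (lam * (1/z - 1) + β) ^ (-c - 1)) z := by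
    simpa [mul_comm, mul_assoc, mul_left_comm] using
      hu.rpow_const (p := -c) (Or.inl hu0.ne')
  have hpow2 : HasDerivAt (fun z : ℝ => (lam * (1/z - 1) + β) ^ (-(c+1)))
      ((lam * (-(z^2)⁻¹)) * (-(c+1)) * (lam * (1/z - 1) + β) ^ (-(c+1) - 1)) z := by
    simpa [mul_comm, mul_assoc, mul_left_comm] using
      hu.rpow_const (p := -(c+1)) (Or.inl hu0.ne')
  have H : HasDerivAt (wlerF c β lam)
      (β ^ (c+1) / ((β + c) * Real.Gamma c) *
        (Real.Gamma c * ((lam * (-(z^2)⁻¹)) * (-c) * (lam * (1/z - 1) + β) ^ (-c - 1))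
          + Real.Gamma (c+1) *
            ((lam * (-(z^2)⁻¹)) * (-(c+1)) * (lam * (1/z - 1) + β) ^ (-(c+1) - 1)))) z :=
    (((hpow1.const_mul (Real.Gamma c)).add
      (hpow2.const_mul (Real.Gamma (c+1)))).const_mul _)
  convert H using 1
  unfold wlerD
  rw [show -c - 1 = -(c+1) by ring, show -(c+1) - 1 = -(c+2) by ring,
    show Real.Gamma (c+2) = (c+1) * Real.Gamma (c+1) by
      rw [show c + 2 = (c+1) + 1 by ring, Real.Gamma_add_one (by positivity)],
    show Real.Gamma (c+1) = c * Real.Gamma c by rw [Real.Gamma_add_one hc.ne']]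
  field_simp

lemma wler_FTC {c β lam : ℝ} (hc : 0 < c) (hβ : 0 < β) (hlam : 0 < lam)
    {ε s : ℝ} (hε : 0 < ε) (hεs : ε ≤ s) (hs : s ≤ 1) :
    ∫ z in Ioo ε s, wlerD c β lam z = wlerF c β lam s - wlerF c β lam ε := by
  rw [← MeasureTheory.integral_Ioc_eq_integral_Ioo, ← intervalIntegral.integral_of_le hεs]
  refine intervalIntegral.integral_eq_sub_of_hasDerivAt (fun x hx => ?_) ?_
  · rw [uIcc_of_le hεs] at hx
    exact wler_hasDerivAt hc hβ hlam (lt_of_lt_of_le hε hx.1) (hx.2.trans hs)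
  · exact (wler_contOn hβ hlam hε hs).intervalIntegrable_of_Icc hεs

lemma wler_nu {c β lam : ℝ} (hc : 0 < c) (hβ : 0 < β) (hlam : 0 < lam)
    {s : ℝ} (hs0 : 0 < s) (hs1 : s ≤ 1) :
    ∫⁻ z in Ioo (0:ℝ) s, ENNReal.ofReal (wlerD c β lam z)
      = ENNReal.ofReal (wlerF c β lam s) := by
  have hmeas : Measurable (fun z : ℝ => ENNReal.ofReal (wlerD c β lam z)) := by
    unfold wlerD
    have hu : Measurable (fun z : ℝ => lam * (1 / z - 1) + β) := by
      fun_prop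
    fun_prop
  set W : Measure ℝ := volume.withDensity (fun z => ENNReal.ofReal (wlerD c β lam z)) with hW
  have hWap : ∀ t : Set ℝ, MeasurableSet t →
      W t = ∫⁻ z in t, ENNReal.ofReal (wlerD c β lam z) := fun t ht =>
    withDensity_apply _ ht
  set e : ℕ → ℝ := fun n => s / (n + 2) with he
  have he_pos : ∀ n, 0 < e n := fun n => by positivity
  have he_le : ∀ n, e n ≤ s := fun n => by
    rw [he]; rw [div_le_iff₀ (by positivity)]; nlinarith [(he_pos n).le]
  have he_anti : Antitone e := fun m n hmn => by
    apply div_le_div_of_nonneg_left hs0.le (by positivity)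
    have : (m:ℝ) ≤ n := Nat.cast_le.mpr hmn
    linarith
  have hmono : Monotone (fun n => Ioo (e n) s) := fun m n hmn =>
    Ioo_subset_Ioo (he_anti hmn) le_rfl
  have hunion : ⋃ n, Ioo (e n) s = Ioo (0:ℝ) s := by
    apply subset_antisymm
    · exact iUnion_subset fun n => Ioo_subset_Ioo (he_pos n).le le_rfl
    · intro x hx
      obtain ⟨n, hn⟩ := exists_nat_gt (s / x)
      refine mem_iUnion.mpr ⟨n, ?_, hx.2⟩
      rw [he, div_lt_iff₀ (by positivity)]
      have h1 : s / x < n := hn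
      have h2 : s / x * x = s := div_mul_cancel₀ s hx.1.ne'
      nlinarith [hx.1]
  have hval : ∀ n, W (Ioo (e n) s)
      = ENNReal.ofReal (wlerF c β lam s - wlerF c β lam (e n)) := by
    intro n
    rw [hWap _ measurableSet_Ioo]
    rw [← ofReal_integral_eq_lintegral_ofReal]
    · rw [wler_FTC hc hβ hlam (he_pos n) (he_le n) hs1]
    · exact (wler_contOn hβ hlam (he_pos n) hs1).integrableOn_Icc.mono_set
        Ioo_subset_Icc_self
    · refine (ae_restrict_iff' measurableSet_Ioo).2 (Filter.Eventually.of_forall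
        fun x hx => wler_D_nonneg hc hβ hlam (lt_of_le_of_lt (he_pos n).le hx.1)
          (hx.2.le.trans hs1))
  have hlim1 : Tendsto (fun n => W (Ioo (e n) s)) atTop (𝓝 (W (Ioo 0 s))) := by
    have h := tendsto_measure_iUnion_atTop (μ := W) hmono
    rwa [hunion] at h
  have hu_t : Tendsto (fun n : ℕ => lam * (1/(e n) - 1) + β) atTop atTop := by
    have h1 : Tendsto (fun n : ℕ => ((n:ℝ)+2)/s) atTop atTop :=
      (tendsto_atTop_add_const_right atTop 2 (tendsto_natCast_atTop_atTop (R := ℝ))).atTop_div_const hs0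
    have h2 : Tendsto (fun n : ℕ => lam * (((n:ℝ)+2)/s - 1) + β) atTop atTop := by
      refine tendsto_atTop_add_const_right _ β (Tendsto.const_mul_atTop hlam ?_)
      have := tendsto_atTop_add_const_right atTop (-1 : ℝ) h1
      simpa [sub_eq_add_neg] using this
    refine Tendsto.congr (fun n => ?_) h2
    rw [he]
    simp only [one_div_div]
  have hF0 : Tendsto (fun n => wlerF c β lam (e n)) atTop (𝓝 0) := by
    unfold wlerF
    have t1 : Tendsto (fun n : ℕ => (lam * (1/(e n) - 1) + β) ^ (-c)) atTop (𝓝 0) :=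
      (tendsto_rpow_neg_atTop hc).comp hu_t
    have t2 : Tendsto (fun n : ℕ => (lam * (1/(e n) - 1) + β) ^ (-(c+1))) atTop (𝓝 0) :=
      (tendsto_rpow_neg_atTop (by linarith)).comp hu_t
    have := (((t1.const_mul (Real.Gamma c)).add
      (t2.const_mul (Real.Gamma (c+1)))).const_mul
        (β ^ (c+1) / ((β + c) * Real.Gamma c)))
    simpa using this
  have hlim2 : Tendsto (fun n => ENNReal.ofReal (wlerF c β lam s - wlerF c β lam (e n)))
      atTop (𝓝 (ENNReal.ofReal (wlerF c β lam s))) := by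
    have h := Filter.Tendsto.sub (tendsto_const_nhds
      (x := wlerF c β lam s) (f := atTop (α := ℕ))) hF0
    rw [sub_zero] at h
    exact (ENNReal.continuous_ofReal.tendsto _).comp h
  have key : W (Ioo (0:ℝ) s) = ENNReal.ofReal (wlerF c β lam s) :=
    tendsto_nhds_unique (Tendsto.congr hval hlim1) hlim2
  rw [← hWap _ measurableSet_Ioo, key]
theorem weighted_lindley_exponential_ratio
    {Ω : Type*} [MeasurableSpace Ω] (P : Measure Ω) [IsProbabilityMeasure P]
    (c β lam : ℝ) (hc : 0 < c) (hβ : 0 < β) (hlam : 0 < lam)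
    (X Y : Ω → ℝ) (hXm : Measurable X) (hYm : Measurable Y)
    (hindep : IndepFun X Y P)
    (hXpos : ∀ᵐ ω ∂P, 0 < X ω) (hYpos : ∀ᵐ ω ∂P, 0 < Y ω)
    (hX : P.map X = (volume.restrict (Ioi 0)).withDensity
      (fun x => ENNReal.ofReal (β ^ (c + 1) / ((β + c) * Real.Gamma c) *
        (x ^ (c - 1) * (1 + x) * Real.exp (-(β * x))))))
    (hY : P.map Y = (volume.restrict (Ioi 0)).withDensity
      (fun y => ENNReal.ofReal (lam * Real.exp (-(lam * y))))) :
    P.map (fun ω => X ω / (X ω + Y ω)) = (volume.restrict (Ioo 0 1)).withDensity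
      (fun z => ENNReal.ofReal (lam * β ^ (c + 1) / ((β + c) * Real.Gamma c) *
        (1 / z ^ 2) *
        (Real.Gamma (c + 1) * (lam * (1 / z - 1) + β) ^ (-(c + 1)) +
         Real.Gamma (c + 2) * (lam * (1 / z - 1) + β) ^ (-(c + 2))))) := by
  have hΓ : 0 < Real.Gamma c := Real.Gamma_pos_of_pos hc
  set A : ℝ := β ^ (c + 1) / ((β + c) * Real.Gamma c) with hA_def
  have hA : 0 ≤ A := by
    rw [hA_def]
    have : (0:ℝ) ≤ β ^ (c+1) := Real.rpow_nonneg hβ.le _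
    positivity
  have hD : (fun z : ℝ => ENNReal.ofReal (lam * β ^ (c + 1) / ((β + c) * Real.Gamma c) *
        (1 / z ^ 2) *
        (Real.Gamma (c + 1) * (lam * (1 / z - 1) + β) ^ (-(c + 1)) +
         Real.Gamma (c + 2) * (lam * (1 / z - 1) + β) ^ (-(c + 2)))))
      = fun z => ENNReal.ofReal (wlerD c β lam z) := rfl
  rw [hD]
  set Z : Ω → ℝ := fun ω => X ω / (X ω + Y ω) with hZ_def
  have hZm : Measurable Z := hXm.div (hXm.add hYm)
  haveI : IsProbabilityMeasure (P.map Z) := Measure.isProbabilityMeasure_map hZm.aemeasurable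
  refine Measure.ext_of_Iic _ _ (fun a => ?_)
  rw [Measure.map_apply hZm measurableSet_Iic,
    withDensity_apply _ measurableSet_Iic, Measure.restrict_restrict measurableSet_Iic]
  rcases le_or_gt a 0 with ha0 | ha0
  · -- a ≤ 0 : both sides are zero
    have hset : Iic a ∩ Ioo (0:ℝ) 1 = ∅ :=
      eq_empty_of_forall_notMem fun x hx => absurd (hx.1.trans ha0) (not_le.mpr hx.2.1)
    rw [hset]
    simp only [Measure.restrict_empty, lintegral_zero_measure]
    refine measure_eq_zero_iff_ae_notMem.2 ?_
    filter_upwards [hXpos, hYpos] with ω hx hy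
    simp only [mem_preimage, mem_Iic, not_le, hZ_def]
    have : 0 < X ω / (X ω + Y ω) := div_pos hx (by linarith)
    linarith
  rcases lt_or_ge a 1 with ha1 | ha1
  · -- 0 < a < 1 : main case
    have hset : Iic a ∩ Ioo (0:ℝ) 1 = Ioc 0 a := by
      ext x
      simp only [mem_inter_iff, mem_Iic, mem_Ioo, mem_Ioc]
      constructor
      · rintro ⟨h1, h2, _⟩; exact ⟨h2, h1⟩
      · rintro ⟨h1, h2⟩; exact ⟨h2, h1, lt_of_le_of_lt h2 ha1⟩
    rw [hset, ← setLIntegral_congr (Ioo_ae_eq_Ioc (a := (0:ℝ)) (b := a)),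
      wler_nu hc hβ hlam ha0 ha1.le]
    -- now the left-hand side
    set t : ℝ := 1 / a - 1 with ht_def
    have ht : 0 < t := by
      rw [ht_def]
      have : 1 < 1 / a := by rw [lt_div_iff₀ ha0]; linarith
      linarith
    set u : ℝ := lam * t + β with hu_def
    have hu0 : 0 < u := by positivity
    set S : Set (ℝ × ℝ) := {p : ℝ × ℝ | t * p.1 ≤ p.2} with hS_def
    have hS : MeasurableSet S := measurableSet_le (measurable_fst.const_mul t) measurable_snd
    have hat : a * t = 1 - a := by
      rw [ht_def]; field_simp
    have hae : (Z ⁻¹' Iic a) =ᵐ[P] ((fun ω => (X ω, Y ω)) ⁻¹' S) := by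
      rw [Filter.eventuallyEq_set]
      filter_upwards [hXpos, hYpos] with ω hx hy
      simp only [mem_preimage, mem_Iic, hS_def, mem_setOf_eq, hZ_def]
      rw [div_le_iff₀ (by linarith)]
      constructor
      · intro h; nlinarith
      · intro h; nlinarith
    rw [measure_congr hae, ← Measure.map_apply (hXm.prodMk hYm) hS,
      (indepFun_iff_map_prod_eq_prod_map_map hXm.aemeasurable hYm.aemeasurable).mp hindep,
      hX, hY, Measure.prod_apply hS]
    have hsec : ∀ x : ℝ, (Prod.mk x ⁻¹' S) = Ici (t * x) := fun x => rfl
    simp only [hsec]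
    set g : ℝ → ℝ≥0∞ := fun x => ((volume.restrict (Ioi 0)).withDensity
      (fun y => ENNReal.ofReal (lam * Real.exp (-(lam * y))))) (Ici (t * x)) with hg_def
    have hg_anti : Antitone g := fun x1 x2 h12 =>
      measure_mono (Ici_subset_Ici.2 (mul_le_mul_of_nonneg_left h12 ht.le))
    have hgm : Measurable g := hg_anti.measurable
    have hρm : Measurable (fun x : ℝ => ENNReal.ofReal (A *
        (x ^ (c - 1) * (1 + x) * Real.exp (-(β * x))))) := by
      have h1 : Measurable (fun x : ℝ => x ^ (c - 1)) := by fun_prop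
      fun_prop
    rw [lintegral_withDensity_eq_lintegral_mul _ hρm hgm]
    have hstep : ∫⁻ x in Ioi (0:ℝ),
        ((fun x => ENNReal.ofReal (A * (x ^ (c - 1) * (1 + x) * Real.exp (-(β * x))))) * g) x
        = ∫⁻ x in Ioi (0:ℝ),
          ENNReal.ofReal (A * (x ^ (c - 1) * (1 + x) * Real.exp (-(u * x)))) := by
      refine setLIntegral_congr_fun measurableSet_Ioi
        (fun x hx => ?_)
      have hx0 : (0:ℝ) < x := hx
      simp only [Pi.mul_apply, hg_def]
      rw [wler_expTail hlam (by positivity)]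
      rw [← ENNReal.ofReal_mul (by
        have : (0:ℝ) ≤ x ^ (c-1) := Real.rpow_nonneg hx0.le _
        positivity)]
      congr 1
      have hxexp : Real.exp (-(β * x)) * Real.exp (-(lam * (t * x)))
          = Real.exp (-(u * x)) := by
        rw [← Real.exp_add]; congr 1; rw [hu_def]; ring
      linear_combination A * (x ^ (c-1) * (1 + x)) * hxexp
    rw [hstep]
    rw [← ofReal_integral_eq_lintegral_ofReal ((wler_wlIntegrable hc hu0).const_mul A)
      ((ae_restrict_iff' measurableSet_Ioi).2 (Filter.Eventually.of_forall fun x hx => by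
        have hx0 : (0:ℝ) < x := hx
        have : (0:ℝ) ≤ x ^ (c-1) := Real.rpow_nonneg hx0.le _
        positivity))]
    rw [MeasureTheory.integral_const_mul, wler_wlIntegral hc hu0]
    congr 1
    unfold wlerF
    rw [← hA_def, ← ht_def, ← hu_def,
      one_div, Real.inv_rpow hu0.le, ← Real.rpow_neg hu0.le,
      Real.inv_rpow hu0.le, ← Real.rpow_neg hu0.le]
  · -- 1 ≤ a : both sides are one
    have hset : Iic a ∩ Ioo (0:ℝ) 1 = Ioo 0 1 :=
      inter_eq_right.mpr fun x hx => le_of_lt (lt_of_lt_of_le hx.2 ha1)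
    rw [hset, wler_nu hc hβ hlam one_pos le_rfl]
    have hF1 : wlerF c β lam 1 = 1 := by
      unfold wlerF
      have h0 : lam * (1 / 1 - 1) + β = β := by norm_num
      rw [h0, show Real.Gamma (c+1) = c * Real.Gamma c by
        rw [Real.Gamma_add_one hc.ne']]
      have h1 : β ^ (c+1) * β ^ (-c) = β := by
        rw [← Real.rpow_add hβ, show c + 1 + -c = 1 by ring, Real.rpow_one]
      have h2 : β ^ (c+1) * β ^ (-(c+1)) = 1 := by
        rw [← Real.rpow_add hβ, show c + 1 + -(c+1) = 0 by ring, Real.rpow_zero]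
      rw [div_mul_eq_mul_div, div_eq_iff (by positivity)]
      linear_combination Real.Gamma c * h1 + c * Real.Gamma c * h2
    rw [hF1, ENNReal.ofReal_one]
    have hae : (Z ⁻¹' Iic a) =ᵐ[P] (univ : Set Ω) := by
      rw [Filter.eventuallyEq_set]
      filter_upwards [hXpos, hYpos] with ω hx hy
      simp only [mem_preimage, mem_Iic, mem_univ, iff_true, hZ_def]
      have h1 : X ω / (X ω + Y ω) < 1 := by
        rw [div_lt_one (by linarith)]; linarith
      linarith
    rw [measure_congr hae, measure_univ]
end

section
/- Let a₁, d₁, a₂, d₂, θ > 0. Let X and Y be independent random variables on a probability space, each almost surely positive, where X has the generalized gamma density f_X(x) = (θ/(a₁^{d₁} * Γ(d₁/θ))) * x^{d₁-1} * exp(-(x/a₁)^θ) and Y has the generalized gamma density f_Y(y) = (θ/(a₂^{d₂} * Γ(d₂/θ))) * y^{d₂-1} * exp(-(y/a₂)^θ). Then Z = X/(X+Y) has density, for z ∈ (0,1), f_Z(z) = (θ * a₁^{d₂} * a₂^{d₁} / B(d₁/θ, d₂/θ)) * z^{d₁-1} * (1-z)^{d₂-1} / ((a₂*z)^θ + (a₁*(1-z))^θ)^{(d₁+d₂)/θ}.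 -/
open MeasureTheory ProbabilityTheory Real Set

theorem my_lintegral_image {s : Set ℝ} {f f' : ℝ → ℝ}
    (hs : MeasurableSet s) (hf' : ∀ x ∈ s, HasDerivWithinAt f (f' x) s x)
    (hf : InjOn f s) (g : ℝ → ENNReal) :
    ∫⁻ x in f '' s, g x = ∫⁻ x in s, ENNReal.ofReal |f' x| * g (f x) := by
  simpa only [ContinuousLinearMap.det_toSpanSingleton] using
    lintegral_image_eq_lintegral_abs_det_fderiv_mul volume hs
      (fun x hx => (hf' x hx).hasFDerivWithinAt) hf g

theorem lintegral_Gamma {t : ℝ} (ht : 0 < t) :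
    ∫⁻ u in Ioi (0:ℝ), ENNReal.ofReal (u ^ (t-1) * Real.exp (-u)) =
      ENNReal.ofReal (Real.Gamma t) := by
  rw [Real.Gamma_eq_integral ht, ← ofReal_integral_eq_lintegral_ofReal]
  · congr 1
    refine setIntegral_congr_fun measurableSet_Ioi fun x hx => ?_
    ring
  · exact (Real.GammaIntegral_convergent ht).congr_fun (fun x hx => by ring) measurableSet_Ioi
  · filter_upwards [ae_restrict_mem measurableSet_Ioi] with x hx
    have : (0:ℝ) < x := hx
    positivity

theorem lintegral_gg {c θ β : ℝ} (hc : 0 < c) (hθ : 0 < θ) (hβ : 0 < β) :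
    ∫⁻ x in Ioi (0:ℝ), ENNReal.ofReal (x ^ (c-1) * Real.exp (-(β * x ^ θ))) =
      ENNReal.ofReal (Real.Gamma (c/θ) * β ^ (-(c/θ)) / θ) := by
  have hderiv : ∀ u ∈ Ioi (0:ℝ), HasDerivWithinAt (fun u : ℝ => (u/β) ^ θ⁻¹)
      (θ⁻¹ * (u/β) ^ (θ⁻¹ - 1) * (1/β)) (Ioi 0) u := by
    intro u hu
    have hu' : (0:ℝ) < u := hu
    have h1 : HasDerivAt (fun u : ℝ => u / β) (1/β) u := (hasDerivAt_id u).div_const β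
    have h2 : HasDerivAt (fun w : ℝ => w ^ θ⁻¹) (θ⁻¹ * (u/β) ^ (θ⁻¹ - 1)) (u/β) :=
      Real.hasDerivAt_rpow_const (p := θ⁻¹) (Or.inl (ne_of_gt (div_pos hu' hβ)))
    exact (h2.comp u h1).hasDerivWithinAt
  have hinj : InjOn (fun u : ℝ => (u/β) ^ θ⁻¹) (Ioi 0) := by
    intro u hu v hv huv
    have hu' : (0:ℝ) < u := hu
    have hv' : (0:ℝ) < v := hv
    by_contra hne
    rcases lt_or_gt_of_ne hne with h | h
    · exact absurd huv (ne_of_lt (Real.rpow_lt_rpow (by positivity)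
        (div_lt_div_of_pos_right h hβ) (by positivity)))
    · exact absurd huv.symm (ne_of_lt (Real.rpow_lt_rpow (by positivity)
        (div_lt_div_of_pos_right h hβ) (by positivity)))
  have himg : (fun u : ℝ => (u/β) ^ θ⁻¹) '' Ioi 0 = Ioi 0 := by
    ext y
    constructor
    · rintro ⟨u, hu, rfl⟩
      have hu' : (0:ℝ) < u := hu
      exact mem_Ioi.mpr (Real.rpow_pos_of_pos (div_pos hu' hβ) _)
    · intro hy
      have hy' : (0:ℝ) < y := hy
      refine ⟨β * y ^ θ, mem_Ioi.mpr (by positivity), ?_⟩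
      show (β * y ^ θ / β) ^ θ⁻¹ = y
      rw [mul_comm, mul_div_assoc, div_self (ne_of_gt hβ), mul_one,
        ← Real.rpow_mul (le_of_lt hy'), mul_inv_cancel₀ (ne_of_gt hθ), Real.rpow_one]
  calc
    ∫⁻ x in Ioi (0:ℝ), ENNReal.ofReal (x ^ (c-1) * Real.exp (-(β * x ^ θ)))
      = ∫⁻ u in Ioi (0:ℝ), ENNReal.ofReal |θ⁻¹ * (u/β) ^ (θ⁻¹ - 1) * (1/β)| *
          ENNReal.ofReal (((u/β) ^ θ⁻¹) ^ (c-1) * Real.exp (-(β * ((u/β) ^ θ⁻¹) ^ θ))) := by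
        conv_lhs => rw [← himg]
        rw [my_lintegral_image measurableSet_Ioi hderiv hinj]
    _ = ∫⁻ u in Ioi (0:ℝ), ENNReal.ofReal ((β ^ (-(c/θ)) / θ) *
          (u ^ (c/θ - 1) * Real.exp (-u))) := by
        refine setLIntegral_congr_fun measurableSet_Ioi (fun u hu => ?_)
        have hu' : (0:ℝ) < u := hu
        have hw : (0:ℝ) < u / β := div_pos hu' hβ
        have hθ' : θ ≠ 0 := ne_of_gt hθ
        have hβ' : β ≠ 0 := ne_of_gt hβ
        rw [← ENNReal.ofReal_mul (abs_nonneg _)]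
        congr 1
        have e1 : β * ((u/β) ^ θ⁻¹) ^ θ = u := by
          rw [← Real.rpow_mul (le_of_lt hw), inv_mul_cancel₀ hθ', Real.rpow_one,
            mul_div_cancel₀ _ hβ']
        have e2 : ((u/β) ^ θ⁻¹) ^ (c-1) = (u/β) ^ (θ⁻¹ * (c-1)) :=
          (Real.rpow_mul (le_of_lt hw) _ _).symm
        rw [e1, e2, abs_of_pos (by positivity)]
        have e3 : (u/β) ^ (θ⁻¹ - 1) * (u/β) ^ (θ⁻¹ * (c-1)) = (u/β) ^ (c/θ - 1) := by
          rw [← Real.rpow_add hw]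
          congr 1
          field_simp
          ring
        have e4 : (u/β) ^ (c/θ - 1) = u ^ (c/θ - 1) * β ^ (-(c/θ - 1)) := by
          rw [Real.div_rpow (le_of_lt hu') (le_of_lt hβ), Real.rpow_neg (le_of_lt hβ),
            div_eq_mul_inv]
        have e5 : β ^ (-(c/θ - 1)) = β ^ (-(c/θ)) * β := by
          rw [show -(c/θ - 1) = -(c/θ) + 1 by ring, Real.rpow_add hβ, Real.rpow_one]
        calc θ⁻¹ * (u/β) ^ (θ⁻¹ - 1) * (1/β) * ((u/β) ^ (θ⁻¹ * (c-1)) * Real.exp (-u))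
            = ((u/β) ^ (θ⁻¹ - 1) * (u/β) ^ (θ⁻¹ * (c-1))) * Real.exp (-u) * θ⁻¹ * (1/β) := by
              ring
          _ = (β ^ (-(c/θ)) / θ) * (u ^ (c/θ - 1) * Real.exp (-u)) := by
              rw [e3, e4, e5]
              field_simp
    _ = ENNReal.ofReal (Real.Gamma (c/θ) * β ^ (-(c/θ)) / θ) := by
        have hct : (0:ℝ) < c/θ := by positivity
        have hC : (0:ℝ) ≤ β ^ (-(c/θ)) / θ := by positivity
        simp_rw [ENNReal.ofReal_mul hC]
        rw [lintegral_const_mul' _ _ ENNReal.ofReal_ne_top, lintegral_Gamma hct,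
          ← ENNReal.ofReal_mul hC]
        congr 1
        ring

theorem sub_y {x : ℝ} (hx : 0 < x) (H : ℝ → ENNReal) :
    ∫⁻ y in Ioi (0:ℝ), H y
      = ∫⁻ z in Ioo (0:ℝ) 1, ENNReal.ofReal (x / z^2) * H (x/z - x) := by
  have hderiv : ∀ z ∈ Ioo (0:ℝ) 1,
      HasDerivWithinAt (fun z : ℝ => x/z - x) (-(x / z^2)) (Ioo 0 1) z := by
    intro z hz
    have hz0 : z ≠ 0 := ne_of_gt hz.1
    have h := ((hasDerivAt_inv hz0).const_mul x).sub_const x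
    have h1 : HasDerivAt (fun y : ℝ => x / y - x) (x * -(z^2)⁻¹) z := by
      simpa only [div_eq_mul_inv] using h
    have h2 : x * -(z^2)⁻¹ = -(x/z^2) := by ring
    rw [h2] at h1
    exact h1.hasDerivWithinAt
  have hinj : InjOn (fun z : ℝ => x/z - x) (Ioo 0 1) := by
    intro z hz w hw hzw
    by_contra hne
    have key : ∀ a b : ℝ, a ∈ Ioo (0:ℝ) 1 → b ∈ Ioo (0:ℝ) 1 → a < b →
        x/b - x < x/a - x := by
      intro a b ha hb hab
      have : x/b < x/a := div_lt_div_of_pos_left hx ha.1 hab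
      linarith
    rcases lt_or_gt_of_ne hne with h | h
    · exact absurd hzw (ne_of_gt (key z w hz hw h))
    · exact absurd hzw (ne_of_lt (key w z hw hz h))
  have himg : (fun z : ℝ => x/z - x) '' Ioo 0 1 = Ioi 0 := by
    ext y
    constructor
    · rintro ⟨z, hz, rfl⟩
      have h1 : x < x/z := by
        rw [lt_div_iff₀ hz.1]
        nlinarith [hz.2, hz.1]
      exact mem_Ioi.mpr (by linarith)
    · intro hy
      have hy' : (0:ℝ) < y := hy
      refine ⟨x/(x+y), ⟨by positivity, ?_⟩, ?_⟩
      · rw [div_lt_one (by linarith)]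
        linarith
      · show x / (x/(x+y)) - x = y
        rw [div_div_eq_mul_div, mul_comm, mul_div_assoc, div_self (ne_of_gt hx), mul_one]
        ring
  conv_lhs => rw [← himg]
  rw [my_lintegral_image measurableSet_Ioo hderiv hinj]
  refine setLIntegral_congr_fun measurableSet_Ioo (fun z hz => ?_)
  rw [abs_neg, abs_of_nonneg (by positivity)]

theorem key_int {a₁ d₁ a₂ d₂ θ z : ℝ} (ha₁ : 0 < a₁) (hd₁ : 0 < d₁) (ha₂ : 0 < a₂)
    (hd₂ : 0 < d₂) (hθ : 0 < θ) (hz0 : 0 < z) (hz1 : z < 1) :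
    ∫⁻ x in Ioi (0:ℝ),
      ENNReal.ofReal (θ / (a₁ ^ d₁ * Real.Gamma (d₁/θ)) *
          (x ^ (d₁-1) * Real.exp (-((x/a₁) ^ θ)))) *
        (ENNReal.ofReal (x / z^2) *
          ENNReal.ofReal (θ / (a₂ ^ d₂ * Real.Gamma (d₂/θ)) *
            ((x/z - x) ^ (d₂-1) * Real.exp (-(((x/z - x)/a₂) ^ θ)))))
    = ENNReal.ofReal (θ * a₁ ^ d₂ * a₂ ^ d₁ /
        (Real.Gamma (d₁/θ) * Real.Gamma (d₂/θ) / Real.Gamma (d₁/θ + d₂/θ)) *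
        (z ^ (d₁-1) * (1-z) ^ (d₂-1) /
          ((a₂*z) ^ θ + (a₁*(1-z)) ^ θ) ^ ((d₁+d₂)/θ))) := by
  have hz1' : 0 < 1 - z := by linarith
  have hw : 0 < (1-z)/z := by positivity
  have hG1 : 0 < Real.Gamma (d₁/θ) := Real.Gamma_pos_of_pos (by positivity)
  have hG2 : 0 < Real.Gamma (d₂/θ) := Real.Gamma_pos_of_pos (by positivity)
  have hGD : 0 < Real.Gamma (d₁/θ + d₂/θ) := Real.Gamma_pos_of_pos (by positivity)
  set w : ℝ := (1-z)/z with hwdef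
  set β : ℝ := (1/a₁)^θ + (w/a₂)^θ with hβ
  have hβpos : 0 < β := by positivity
  set K : ℝ := θ / (a₁ ^ d₁ * Real.Gamma (d₁/θ)) * (θ / (a₂ ^ d₂ * Real.Gamma (d₂/θ))) *
      (w ^ (d₂-1) / z^2) with hK
  have hKpos : 0 < K := by positivity
  have hD : 0 < d₁ + d₂ := by linarith
  calc
    _ = ∫⁻ x in Ioi (0:ℝ), ENNReal.ofReal (K * (x ^ (d₁+d₂-1) * Real.exp (-(β * x ^ θ)))) := by
      refine setLIntegral_congr_fun measurableSet_Ioi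
        (fun x hx => ?_)
      have hx' : (0:ℝ) < x := hx
      rw [← ENNReal.ofReal_mul (by positivity), ← ENNReal.ofReal_mul (by positivity)]
      congr 1
      have e0 : x/z - x = x * w := by rw [hwdef]; field_simp
      have e3 : (x/a₁) ^ θ = x^θ * (1/a₁)^θ := by
        rw [show x/a₁ = x * (1/a₁) by ring, Real.mul_rpow (le_of_lt hx') (by positivity)]
      have e1 : (x * w) ^ (d₂-1) = x^(d₂-1) * w^(d₂-1) :=
        Real.mul_rpow (le_of_lt hx') (le_of_lt hw)
      have e2 : ((x * w)/a₂) ^ θ = x^θ * (w/a₂)^θ := by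
        rw [show x * w / a₂ = x * (w/a₂) by ring,
          Real.mul_rpow (le_of_lt hx') (by positivity)]
      have e6 : Real.exp (-(x^θ * (1/a₁)^θ)) * Real.exp (-(x^θ * (w/a₂)^θ))
          = Real.exp (-(β * x^θ)) := by
        rw [← Real.exp_add]; congr 1; rw [hβ]; ring
      have e5 : x^(d₁-1) * x^(d₂-1) * x = x^(d₁+d₂-1) := by
        rw [← Real.rpow_add hx', ← Real.rpow_add_one (ne_of_gt hx')]
        congr 1; ring
      rw [e0, e3, e1, e2]
      calc θ / (a₁ ^ d₁ * Real.Gamma (d₁/θ)) * (x ^ (d₁-1) * Real.exp (-(x^θ * (1/a₁)^θ))) *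
            (x / z^2 * (θ / (a₂ ^ d₂ * Real.Gamma (d₂/θ)) *
              (x^(d₂-1) * w^(d₂-1) * Real.exp (-(x^θ * (w/a₂)^θ)))))
          = K * ((x^(d₁-1) * x^(d₂-1) * x) *
              (Real.exp (-(x^θ * (1/a₁)^θ)) * Real.exp (-(x^θ * (w/a₂)^θ)))) := by
            rw [hK]; ring
        _ = K * (x^(d₁+d₂-1) * Real.exp (-(β * x^θ))) := by rw [e5, e6]
    _ = ENNReal.ofReal K * ∫⁻ x in Ioi (0:ℝ),
          ENNReal.ofReal (x ^ (d₁+d₂-1) * Real.exp (-(β * x ^ θ))) := by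
      simp_rw [ENNReal.ofReal_mul (le_of_lt hKpos)]
      rw [lintegral_const_mul' _ _ ENNReal.ofReal_ne_top]
    _ = ENNReal.ofReal (K * (Real.Gamma ((d₁+d₂)/θ) * β ^ (-((d₁+d₂)/θ)) / θ)) := by
      rw [lintegral_gg hD hθ hβpos, ← ENNReal.ofReal_mul (le_of_lt hKpos)]
    _ = _ := by
      congr 1
      set Q : ℝ := (a₂*z) ^ θ + (a₁*(1-z)) ^ θ with hQ
      have hQpos : 0 < Q := by positivity
      have b1 : (1:ℝ)/a₁ = a₂*z/(a₁*a₂*z) := by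
        rw [div_eq_div_iff (by positivity) (by positivity)]; ring
      have b2 : w/a₂ = a₁*(1-z)/(a₁*a₂*z) := by
        rw [hwdef, div_div, div_eq_div_iff (by positivity) (by positivity)]; ring
      have hβQ : β = Q / (a₁*a₂*z)^θ := by
        rw [hβ, hQ, b1, b2, Real.div_rpow (by positivity) (by positivity),
          Real.div_rpow (le_of_lt (mul_pos ha₁ hz1')) (by positivity), ← add_div]
      have h2 : β ^ (-((d₁+d₂)/θ)) = a₁^(d₁+d₂) * a₂^(d₁+d₂) * z^(d₁+d₂) / Q^((d₁+d₂)/θ) := by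
        have hR : (0:ℝ) < (a₁*a₂*z)^θ := Real.rpow_pos_of_pos (by positivity) _
        rw [hβQ, Real.rpow_neg (le_of_lt (div_pos hQpos hR)),
          ← Real.inv_rpow (le_of_lt (div_pos hQpos hR)), inv_div,
          Real.div_rpow (by positivity) (le_of_lt hQpos),
          ← Real.rpow_mul (by positivity : (0:ℝ) ≤ a₁*a₂*z),
          show θ * ((d₁+d₂)/θ) = d₁+d₂ by field_simp,
          Real.mul_rpow (by positivity) (le_of_lt hz0),
          Real.mul_rpow (le_of_lt ha₁) (le_of_lt ha₂)]
      have h3 : Real.Gamma ((d₁+d₂)/θ) = Real.Gamma (d₁/θ + d₂/θ) := by rw [add_div]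
      have e11 : a₁^(d₁+d₂) = a₁^d₁ * a₁^d₂ := Real.rpow_add ha₁ _ _
      have e12 : a₂^(d₁+d₂) = a₂^d₁ * a₂^d₂ := Real.rpow_add ha₂ _ _
      have e13 : z^(d₁+d₂) = z^(d₁-1) * z^(d₂-1) * z^2 := by
        rw [← Real.rpow_add hz0, show z^(2:ℕ) = z^((2:ℕ):ℝ) from (Real.rpow_natCast z 2).symm,
          ← Real.rpow_add hz0]
        congr 1; push_cast; ring
      have e14 : w^(d₂-1) = (1-z)^(d₂-1) / z^(d₂-1) := by
        rw [hwdef, Real.div_rpow (le_of_lt hz1') (le_of_lt hz0)]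
      rw [hK, h2, h3, e11, e12, e13, e14]
      have hzp1 : (0:ℝ) < z^(d₂-1) := Real.rpow_pos_of_pos hz0 _
      have hQp : (0:ℝ) < Q^((d₁+d₂)/θ) := Real.rpow_pos_of_pos hQpos _
      field_simp

theorem generalized_gamma_ratio
    {Ω : Type*} [MeasurableSpace Ω] (P : Measure Ω) [IsProbabilityMeasure P]
    (a₁ d₁ a₂ d₂ θ : ℝ) (ha₁ : 0 < a₁) (hd₁ : 0 < d₁) (ha₂ : 0 < a₂)
    (hd₂ : 0 < d₂) (hθ : 0 < θ)
    (X Y : Ω → ℝ) (hXm : Measurable X) (hYm : Measurable Y)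
    (hindep : IndepFun X Y P)
    (hXpos : ∀ᵐ ω ∂P, 0 < X ω) (hYpos : ∀ᵐ ω ∂P, 0 < Y ω)
    (hX : P.map X = (volume.restrict (Ioi 0)).withDensity
      (fun x => ENNReal.ofReal (θ / (a₁ ^ d₁ * Real.Gamma (d₁ / θ)) *
        (x ^ (d₁ - 1) * Real.exp (-((x / a₁) ^ θ))))))
    (hY : P.map Y = (volume.restrict (Ioi 0)).withDensity
      (fun y => ENNReal.ofReal (θ / (a₂ ^ d₂ * Real.Gamma (d₂ / θ)) *
        (y ^ (d₂ - 1) * Real.exp (-((y / a₂) ^ θ)))))) :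
    P.map (fun ω => X ω / (X ω + Y ω)) = (volume.restrict (Ioo 0 1)).withDensity
      (fun z => ENNReal.ofReal (θ * a₁ ^ d₂ * a₂ ^ d₁ /
        (Real.Gamma (d₁ / θ) * Real.Gamma (d₂ / θ) / Real.Gamma (d₁ / θ + d₂ / θ)) *
        (z ^ (d₁ - 1) * (1 - z) ^ (d₂ - 1) /
          ((a₂ * z) ^ θ + (a₁ * (1 - z)) ^ θ) ^ ((d₁ + d₂) / θ)))) := by
  set f' : ℝ → ENNReal := fun x => ENNReal.ofReal (θ / (a₁ ^ d₁ * Real.Gamma (d₁ / θ)) *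
    (x ^ (d₁ - 1) * Real.exp (-((x / a₁) ^ θ)))) with hf'def
  set g' : ℝ → ENNReal := fun y => ENNReal.ofReal (θ / (a₂ ^ d₂ * Real.Gamma (d₂ / θ)) *
    (y ^ (d₂ - 1) * Real.exp (-((y / a₂) ^ θ)))) with hg'def
  have hf'm : Measurable f' := by fun_prop
  have hg'm : Measurable g' := by fun_prop
  have hφ : Measurable (fun p : ℝ × ℝ => p.1 / (p.1 + p.2)) :=
    measurable_fst.div (measurable_fst.add measurable_snd)
  have hmap : P.map (fun ω => X ω / (X ω + Y ω))
      = ((P.map X).prod (P.map Y)).map (fun p : ℝ × ℝ => p.1 / (p.1 + p.2)) := by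
    rw [← (indepFun_iff_map_prod_eq_prod_map_map hXm.aemeasurable hYm.aemeasurable).mp hindep,
      Measure.map_map hφ (hXm.prodMk hYm)]
    rfl
  rw [hmap, hX, hY]
  set ν : Measure ℝ := (volume.restrict (Ioi 0)).withDensity g' with hν
  have hνfin : IsProbabilityMeasure ν := by
    rw [← hY]; exact Measure.isProbabilityMeasure_map hYm.aemeasurable
  refine Measure.ext fun s hs => ?_
  rw [Measure.map_apply hφ hs, Measure.prod_apply (hφ hs),
    lintegral_withDensity_eq_lintegral_mul _ hf'm
      (measurable_measure_prodMk_left (hφ hs)), withDensity_apply _ hs]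
  calc
    ∫⁻ x in Ioi (0:ℝ), (f' * fun x => ν (Prod.mk x ⁻¹' ((fun p : ℝ × ℝ => p.1 / (p.1 + p.2)) ⁻¹' s))) x
      = ∫⁻ x in Ioi (0:ℝ), ∫⁻ z in Ioo (0:ℝ) 1,
          f' x * (ENNReal.ofReal (x / z^2) * (g' (x/z - x) * s.indicator 1 z)) := by
        refine setLIntegral_congr_fun measurableSet_Ioi
          (fun x hx => ?_)
        have hx' : (0:ℝ) < x := hx
        have hA : MeasurableSet (Prod.mk x ⁻¹' ((fun p : ℝ × ℝ => p.1 / (p.1 + p.2)) ⁻¹' s)) :=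
          measurable_prodMk_left (hφ hs)
        have hν1 : ν (Prod.mk x ⁻¹' ((fun p : ℝ × ℝ => p.1 / (p.1 + p.2)) ⁻¹' s))
            = ∫⁻ y in Ioi (0:ℝ), (g' y * s.indicator 1 (x / (x + y))) := by
          rw [hν, withDensity_apply _ hA, ← lintegral_indicator hA]
          refine lintegral_congr fun y => ?_
          by_cases hmem : x / (x + y) ∈ s
          · rw [Set.indicator_of_mem hmem, Set.indicator_of_mem (by exact hmem), Pi.one_apply,
              mul_one]
          · rw [Set.indicator_of_notMem hmem, Set.indicator_of_notMem (by exact hmem),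
              mul_zero]
        simp only [Pi.mul_apply]
        rw [hν1, sub_y hx' (fun y => g' y * s.indicator 1 (x / (x + y))),
          ← lintegral_const_mul' _ _ ENNReal.ofReal_ne_top]
        refine setLIntegral_congr_fun measurableSet_Ioo
          (fun z hz => ?_)
        have h1 : x / (x + (x/z - x)) = z := by
          rw [add_sub_cancel]
          rw [div_div_eq_mul_div, mul_comm, mul_div_assoc, div_self (ne_of_gt hx'), mul_one]
        rw [h1]
    _ = ∫⁻ z in Ioo (0:ℝ) 1, ∫⁻ x in Ioi (0:ℝ),
          f' x * (ENNReal.ofReal (x / z^2) * (g' (x/z - x) * s.indicator 1 z)) := by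
        refine lintegral_lintegral_swap ?_
        apply Measurable.aemeasurable
        fun_prop (disch := measurability)
    _ = ∫⁻ z in s, (fun z => ENNReal.ofReal (θ * a₁ ^ d₂ * a₂ ^ d₁ /
          (Real.Gamma (d₁ / θ) * Real.Gamma (d₂ / θ) / Real.Gamma (d₁ / θ + d₂ / θ)) *
          (z ^ (d₁ - 1) * (1 - z) ^ (d₂ - 1) /
            ((a₂ * z) ^ θ + (a₁ * (1 - z)) ^ θ) ^ ((d₁ + d₂) / θ)))) z
          ∂(volume.restrict (Ioo 0 1)) := by
        rw [← lintegral_indicator hs]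
        refine setLIntegral_congr_fun measurableSet_Ioo
          (fun z hz => ?_)
        by_cases hzs : z ∈ s
        · simp only [indicator_of_mem hzs, Pi.one_apply, mul_one]
          exact key_int ha₁ hd₁ ha₂ hd₂ hθ hz.1 hz.2
        · simp [indicator_of_notMem hzs]
end

section
/- Let θ > 0 and β > 0. Let X and Y be independent random variables on a probability space, each almost surely positive, where X has the Weibull density f_X(x) = θ * x^{θ-1} * exp(-x^θ) and Y has the Weibull density f_Y(y) = (θ/β^θ) * y^{θ-1} * exp(-(y/β)^θ). Then Z = X/(X+Y) has the unitary Weibull type 2 density f_Z(z) = θ * β^θ * z^{θ-1} * (1-z)^{θ-1} / ((β*z)^θ + (1-z)^θ)^2 for z ∈ (0,1). -/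
open MeasureTheory ProbabilityTheory Real Set

open Filter Topology

lemma expDeriv {θ a : ℝ} (hθ : 0 < θ) (ha : 0 < a) (x : ℝ) (hx : 0 < x) :
    HasDerivAt (fun x : ℝ => -(a⁻¹ * Real.exp (-(a * x ^ θ))))
      (θ * x ^ (θ - 1) * Real.exp (-(a * x ^ θ))) x := by
  have h1 : HasDerivAt (fun x : ℝ => x ^ θ) (θ * x ^ (θ - 1)) x :=
    Real.hasDerivAt_rpow_const (Or.inl hx.ne')
  have h2 : HasDerivAt (fun x : ℝ => -(a * x ^ θ)) (-(a * (θ * x ^ (θ - 1)))) x :=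
    (h1.const_mul a).neg
  have h3 := ((h2.exp).const_mul a⁻¹).neg
  refine h3.congr_deriv ?_
  field_simp [ha.ne']

lemma expCont {θ a : ℝ} (hθ : 0 < θ) :
    Continuous (fun x : ℝ => -(a⁻¹ * Real.exp (-(a * x ^ θ)))) := by
  have : Continuous (fun x : ℝ => x ^ θ) := by
    rw [continuous_iff_continuousAt]
    exact fun x => Real.continuousAt_rpow_const x θ (Or.inr hθ.le)
  continuity

lemma expTendsto {θ a : ℝ} (hθ : 0 < θ) (ha : 0 < a) :
    Tendsto (fun x : ℝ => -(a⁻¹ * Real.exp (-(a * x ^ θ)))) atTop (𝓝 0) := by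
  have h1 : Tendsto (fun x : ℝ => a * x ^ θ) atTop atTop :=
    (tendsto_rpow_atTop hθ).const_mul_atTop ha
  have h2 : Tendsto (fun x : ℝ => Real.exp (-(a * x ^ θ))) atTop (𝓝 0) :=
    Real.tendsto_exp_atBot.comp (tendsto_neg_atBot_iff.mpr h1)
  have := (h2.const_mul a⁻¹).neg
  simpa using this

lemma expIntegralOn {θ a : ℝ} (hθ : 0 < θ) (ha : 0 < a) :
    IntegrableOn (fun x => θ * x ^ (θ - 1) * Real.exp (-(a * x ^ θ))) (Ioi (0:ℝ)) :=
  integrableOn_Ioi_deriv_of_nonneg ((expCont (a := a) hθ).continuousWithinAt)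
    (fun x hx => expDeriv hθ ha x hx)
    (fun x hx => by have : (0:ℝ) < x := hx; positivity) (expTendsto hθ ha)

lemma expIntegral {θ a : ℝ} (hθ : 0 < θ) (ha : 0 < a) :
    ∫ x in Ioi (0:ℝ), θ * x ^ (θ - 1) * Real.exp (-(a * x ^ θ)) = a⁻¹ := by
  rw [integral_Ioi_of_hasDerivAt_of_nonneg ((expCont (a := a) hθ).continuousWithinAt)
    (fun x hx => expDeriv hθ ha x hx) (fun x hx => by have : (0:ℝ) < x := hx; positivity) (expTendsto hθ ha)]
  rw [Real.zero_rpow hθ.ne']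
  simp


section
variable {θ β : ℝ}

lemma survDeriv (hθ : 0 < θ) (hβ : 0 < β) {y : ℝ} (hy : 0 < y) :
    HasDerivAt (fun y : ℝ => -Real.exp (-((y / β) ^ θ)))
      (θ / β ^ θ * y ^ (θ - 1) * Real.exp (-((y / β) ^ θ))) y := by
  have h1 : HasDerivAt (fun y : ℝ => y / β) (1 / β) y := by
    simpa using (hasDerivAt_id y).div_const β
  have h2 : HasDerivAt (fun y : ℝ => (y / β) ^ θ) (1 / β * θ * (y / β) ^ (θ - 1)) y :=
    h1.rpow_const (Or.inl (by positivity))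
  have h3 := (h2.neg.exp).neg
  simp only [Pi.neg_apply] at h3
  refine h3.congr_deriv ?_
  have e1 : (y / β) ^ (θ - 1) = y ^ (θ - 1) / β ^ (θ - 1) :=
    Real.div_rpow hy.le hβ.le _
  have e2 : β ^ θ = β ^ (θ - 1) * β := by
    rw [← Real.rpow_add_one hβ.ne']; ring_nf
  have hb : (0:ℝ) < β ^ (θ - 1) := Real.rpow_pos_of_pos hβ _
  rw [e1, e2]
  field_simp

lemma survCont (hθ : 0 < θ) (hβ : 0 < β) :
    Continuous (fun y : ℝ => -Real.exp (-((y / β) ^ θ))) := by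
  have h : Continuous (fun y : ℝ => (y / β) ^ θ) := by
    rw [continuous_iff_continuousAt]
    exact fun y => (Real.continuousAt_rpow_const _ θ (Or.inr hθ.le)).comp
      ((continuous_id.div_const β).continuousAt)
  continuity

lemma survTendsto (hθ : 0 < θ) (hβ : 0 < β) :
    Tendsto (fun y : ℝ => -Real.exp (-((y / β) ^ θ))) atTop (𝓝 0) := by
  have h1 : Tendsto (fun y : ℝ => (y / β) ^ θ) atTop atTop :=
    (tendsto_rpow_atTop hθ).comp (tendsto_id.atTop_div_const hβ)
  have h2 : Tendsto (fun y : ℝ => Real.exp (-((y / β) ^ θ))) atTop (𝓝 0) :=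
    Real.tendsto_exp_atBot.comp (tendsto_neg_atBot_iff.mpr h1)
  simpa using h2.neg

lemma survIntegrableOn (hθ : 0 < θ) (hβ : 0 < β) {m : ℝ} (hm : 0 < m) :
    IntegrableOn (fun y => θ / β ^ θ * y ^ (θ - 1) * Real.exp (-((y / β) ^ θ))) (Ioi m) :=
  integrableOn_Ioi_deriv_of_nonneg ((survCont hθ hβ).continuousWithinAt)
    (fun y hy => survDeriv hθ hβ (hm.trans hy))
    (fun y hy => by have h0 : (0:ℝ) < y := hm.trans hy; positivity)
    (survTendsto hθ hβ)

lemma survIntegral (hθ : 0 < θ) (hβ : 0 < β) {m : ℝ} (hm : 0 < m) :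
    ∫ y in Ioi m, θ / β ^ θ * y ^ (θ - 1) * Real.exp (-((y / β) ^ θ))
      = Real.exp (-((m / β) ^ θ)) := by
  rw [integral_Ioi_of_hasDerivAt_of_nonneg ((survCont hθ hβ).continuousWithinAt)
    (fun y hy => survDeriv hθ hβ (hm.trans hy))
    (fun y hy => by have h0 : (0:ℝ) < y := hm.trans hy; positivity)
    (survTendsto hθ hβ)]
  simp

end


noncomputable def Fw (θ β z : ℝ) : ℝ := (β * z) ^ θ / ((β * z) ^ θ + (1 - z) ^ θ)

noncomputable def fw (θ β z : ℝ) : ℝ :=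
  θ * β ^ θ * z ^ (θ - 1) * (1 - z) ^ (θ - 1) / ((β * z) ^ θ + (1 - z) ^ θ) ^ 2

section
variable {θ β : ℝ}

lemma Dpos (hθ : 0 < θ) (hβ : 0 < β) {z : ℝ} (h0 : 0 ≤ z) (h1 : z ≤ 1) :
    0 < (β * z) ^ θ + (1 - z) ^ θ := by
  rcases eq_or_lt_of_le h0 with h | h
  · have : (1 - z) ^ θ = 1 := by rw [← h]; norm_num
    have h2 : (0:ℝ) ≤ (β * z) ^ θ := Real.rpow_nonneg (by positivity) _
    linarith
  · have h2 : (0:ℝ) < (β * z) ^ θ := Real.rpow_pos_of_pos (by positivity) _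
    have h3 : (0:ℝ) ≤ (1 - z) ^ θ := Real.rpow_nonneg (by linarith) _
    linarith

lemma Ncont (hθ : 0 < θ) : Continuous (fun z : ℝ => (β * z) ^ θ) := by
  rw [continuous_iff_continuousAt]
  exact fun z => (Real.continuousAt_rpow_const _ θ (Or.inr hθ.le)).comp
    ((continuous_const.mul continuous_id).continuousAt)

lemma Mcont (hθ : 0 < θ) : Continuous (fun z : ℝ => (1 - z) ^ θ) := by
  rw [continuous_iff_continuousAt]
  exact fun z => (Real.continuousAt_rpow_const _ θ (Or.inr hθ.le)).comp
    ((continuous_const.sub continuous_id).continuousAt)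

lemma FwContAt (hθ : 0 < θ) (hβ : 0 < β) {z : ℝ} (h0 : 0 ≤ z) (h1 : z ≤ 1) :
    ContinuousAt (Fw θ β) z := by
  unfold Fw
  exact ((Ncont hθ).continuousAt).div
    (((Ncont hθ).continuousAt).add ((Mcont hθ).continuousAt)) (Dpos hθ hβ h0 h1).ne'

lemma Fw0 (hθ : 0 < θ) : Fw θ β 0 = 0 := by
  unfold Fw
  rw [mul_zero, Real.zero_rpow hθ.ne']
  norm_num

lemma Fw1 (hθ : 0 < θ) (hβ : 0 < β) : Fw θ β 1 = 1 := by
  unfold Fw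
  rw [mul_one, sub_self, Real.zero_rpow hθ.ne', add_zero,
    div_self (Real.rpow_pos_of_pos hβ θ).ne']

lemma FwDeriv (hθ : 0 < θ) (hβ : 0 < β) {z : ℝ} (h0 : 0 < z) (h1 : z < 1) :
    HasDerivAt (Fw θ β) (fw θ β z) z := by
  have hz1 : (0:ℝ) < 1 - z := by linarith
  have hN : HasDerivAt (fun z : ℝ => (β * z) ^ θ) (β * θ * (β * z) ^ (θ - 1)) z := by
    have := (HasDerivAt.const_mul β (hasDerivAt_id z)).rpow_const
      (p := θ) (Or.inl (by positivity))
    simpa [mul_one] using this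
  have hM : HasDerivAt (fun z : ℝ => (1 - z) ^ θ) (-1 * θ * (1 - z) ^ (θ - 1)) z := by
    have := ((hasDerivAt_id z).const_sub 1).rpow_const (p := θ) (Or.inl hz1.ne')
    simpa using this
  have hDne : ((β * z) ^ θ + (1 - z) ^ θ) ≠ 0 := (Dpos hθ hβ h0.le h1.le).ne'
  have hF := hN.div (hN.add hM) hDne
  simp only [Pi.add_apply] at hF
  refine hF.congr_deriv ?_
  unfold fw
  have a1 : (β * z) ^ θ = β ^ θ * z ^ θ := Real.mul_rpow hβ.le h0.le
  have a2 : (β * z) ^ (θ - 1) = β ^ (θ - 1) * z ^ (θ - 1) := Real.mul_rpow hβ.le h0.le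
  have a3 : z ^ θ = z ^ (θ - 1) * z := by
    rw [← Real.rpow_add_one h0.ne']; ring_nf
  have a4 : (1 - z) ^ θ = (1 - z) ^ (θ - 1) * (1 - z) := by
    rw [← Real.rpow_add_one hz1.ne']; ring_nf
  have a5 : β ^ θ = β ^ (θ - 1) * β := by
    rw [← Real.rpow_add_one hβ.ne']; ring_nf
  rw [div_eq_div_iff (by positivity) (by positivity)]
  rw [a1, a2, a4, a5, a3]
  ring

lemma fwContAt (hθ : 0 < θ) (hβ : 0 < β) {z : ℝ} (h0 : 0 < z) (h1 : z < 1) :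
    ContinuousAt (fw θ β) z := by
  have hz1 : (0:ℝ) < 1 - z := by linarith
  have c1 : ContinuousAt (fun z : ℝ => θ * β ^ θ * z ^ (θ - 1)) z :=
    ContinuousAt.mul continuousAt_const (Real.continuousAt_rpow_const _ _ (Or.inl h0.ne'))
  have c2 : ContinuousAt (fun z : ℝ => (1 - z) ^ (θ - 1)) z :=
    (Real.continuousAt_rpow_const _ _ (Or.inl hz1.ne')).comp
      ((continuous_const.sub continuous_id).continuousAt)
  have hD : ((β * z) ^ θ + (1 - z) ^ θ) ^ 2 ≠ 0 :=
    pow_ne_zero 2 (Dpos hθ hβ h0.le h1.le).ne'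
  exact (c1.mul c2).div
    ((((Ncont hθ).continuousAt).add ((Mcont hθ).continuousAt)).pow 2) hD

lemma fwNonneg (hθ : 0 < θ) (hβ : 0 < β) {z : ℝ} (h0 : 0 ≤ z) (h1 : z ≤ 1) :
    0 ≤ fw θ β z := by
  unfold fw
  have h2 : (0:ℝ) ≤ 1 - z := by linarith
  have := Real.rpow_nonneg h0 (θ - 1)
  have := Real.rpow_nonneg h2 (θ - 1)
  positivity

lemma fwIntegral (hθ : 0 < θ) (hβ : 0 < β) {s u : ℝ} (hs : 0 < s) (hsu : s ≤ u)
    (hu : u < 1) : ∫ z in Ioc s u, fw θ β z = Fw θ β u - Fw θ β s := by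
  rw [← intervalIntegral.integral_of_le hsu]
  apply intervalIntegral.integral_eq_sub_of_hasDerivAt
  · intro x hx
    rw [uIcc_of_le hsu] at hx
    exact FwDeriv hθ hβ (hs.trans_le hx.1) (lt_of_le_of_lt hx.2 hu)
  · apply ContinuousOn.intervalIntegrable
    intro x hx
    rw [uIcc_of_le hsu] at hx
    exact (fwContAt hθ hβ (hs.trans_le hx.1) (lt_of_le_of_lt hx.2 hu)).continuousWithinAt
end


section
variable {θ β : ℝ}

noncomputable def κw (θ β : ℝ) : Measure ℝ :=
  (volume.restrict (Ioo 0 1)).withDensity (fun z => ENNReal.ofReal (fw θ β z))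

lemma κw_apply {s : Set ℝ} (hs : MeasurableSet s) :
    κw θ β s = ∫⁻ z in s ∩ Ioo 0 1, ENNReal.ofReal (fw θ β z) := by
  rw [κw, withDensity_apply _ hs, Measure.restrict_restrict hs]

lemma κwIoc (hθ : 0 < θ) (hβ : 0 < β) {s u : ℝ} (hs : 0 < s) (hsu : s ≤ u)
    (hu : u < 1) : κw θ β (Ioc s u) = ENNReal.ofReal (Fw θ β u - Fw θ β s) := by
  rw [κw_apply measurableSet_Ioc]
  have hsub : Ioc s u ∩ Ioo 0 1 = Ioc s u :=
    inter_eq_left.mpr (fun x hx => ⟨hs.trans hx.1, hx.2.trans_lt hu⟩)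
  rw [hsub]
  have hint : IntegrableOn (fw θ β) (Ioc s u) volume := by
    apply (ContinuousOn.integrableOn_Icc ?_).mono_set Ioc_subset_Icc_self
    intro x hx
    exact (fwContAt hθ hβ (hs.trans_le hx.1) (lt_of_le_of_lt hx.2 hu)).continuousWithinAt
  have hnn : 0 ≤ᵐ[volume.restrict (Ioc s u)] fw θ β :=
    (ae_restrict_iff' measurableSet_Ioc).mpr (ae_of_all _ fun x hx =>
      fwNonneg hθ hβ (hs.trans hx.1).le (le_of_lt (lt_of_le_of_lt hx.2 hu)))
  rw [← ofReal_integral_eq_lintegral_ofReal hint hnn, fwIntegral hθ hβ hs hsu hu]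

lemma seq_tendsto (t : ℝ) (c : ℕ) :
    Tendsto (fun n : ℕ => t / (n + c)) atTop (𝓝 0) := by
  apply Tendsto.div_atTop (tendsto_const_nhds (x := t))
  exact tendsto_atTop_add_const_right _ _ tendsto_natCast_atTop_atTop

lemma κwIic_mid (hθ : 0 < θ) (hβ : 0 < β) {t : ℝ} (ht : 0 < t) (ht1 : t < 1) :
    κw θ β (Iic t) = ENNReal.ofReal (Fw θ β t) := by
  have hset : Iic t ∩ Ioo 0 1 = Ioc 0 t ∩ Ioo 0 1 := by
    ext z
    simp only [mem_inter_iff, mem_Iic, mem_Ioo, mem_Ioc]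
    constructor
    · rintro ⟨h1, h2, h3⟩; exact ⟨⟨h2, h1⟩, h2, h3⟩
    · rintro ⟨⟨h1, h2⟩, _⟩; exact ⟨h2, h1, by linarith⟩
  have key : κw θ β (Iic t) = κw θ β (Ioc 0 t) := by
    rw [κw_apply measurableSet_Iic, κw_apply measurableSet_Ioc, hset]
  rw [key]
  -- increasing union
  set s : ℕ → Set ℝ := fun n => Ioc (t / (n + 2)) t with hs
  have hmono : Monotone s := by
    intro n m hnm
    apply Ioc_subset_Ioc_left
    apply div_le_div_of_nonneg_left ht.le (by positivity)
    push_cast; linarith [(Nat.cast_le (α := ℝ)).mpr hnm]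
  have hunion : ⋃ n, s n = Ioc 0 t := by
    apply Subset.antisymm
    · exact iUnion_subset fun n => Ioc_subset_Ioc_left (by positivity)
    · intro z hz
      obtain ⟨n, hn⟩ := exists_nat_ge (t / z)
      refine mem_iUnion.mpr ⟨n, ?_, hz.2⟩
      rw [div_lt_iff₀ (by positivity)]
      have hz0 : 0 < z := hz.1
      have : z * (t / z) = t := mul_div_cancel₀ t hz0.ne'
      nlinarith
  have htend := tendsto_measure_iUnion_atTop (μ := κw θ β) hmono
  rw [hunion] at htend
  have hvals : ∀ n : ℕ, (κw θ β ∘ s) n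
      = ENNReal.ofReal (Fw θ β t - Fw θ β (t / (n + 2))) := by
    intro n
    have h2 : (0:ℝ) < (n:ℝ) + 2 := by positivity
    exact κwIoc hθ hβ (by positivity) (div_le_self ht.le (by linarith)) ht1
  have htend2 : Tendsto (κw θ β ∘ s) atTop (𝓝 (ENNReal.ofReal (Fw θ β t))) := by
    rw [funext hvals]
    have h1 : Tendsto (fun n : ℕ => Fw θ β (t / (n + 2))) atTop (𝓝 (Fw θ β 0)) :=
      (FwContAt hθ hβ le_rfl zero_le_one).tendsto.comp (seq_tendsto t 2)
    have h2 : Tendsto (fun n : ℕ => Fw θ β t - Fw θ β (t / (n + 2))) atTop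
        (𝓝 (Fw θ β t)) := by
      have := (tendsto_const_nhds (x := Fw θ β t) (f := atTop (α := ℕ))).sub h1
      rw [Fw0 hθ] at this; simpa using this
    exact (ENNReal.continuous_ofReal.tendsto _).comp h2
  exact tendsto_nhds_unique htend htend2

lemma κwTotal (hθ : 0 < θ) (hβ : 0 < β) : κw θ β (Ioo 0 1) = 1 := by
  set s : ℕ → Set ℝ := fun n => Ioc (1 / (n + 4)) (1 - 1 / (n + 4)) with hs
  have hmono : Monotone s := by
    intro n m hnm
    have hc : ((n:ℝ) + 4) ≤ ((m:ℝ) + 4) := by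
      have := (Nat.cast_le (α := ℝ)).mpr hnm; linarith
    have h1 : 1 / ((m:ℝ) + 4) ≤ 1 / ((n:ℝ) + 4) :=
      div_le_div_of_nonneg_left zero_le_one (by positivity) hc
    exact Ioc_subset_Ioc h1 (by linarith)
  have hunion : ⋃ n, s n = Ioo 0 1 := by
    apply Subset.antisymm
    · refine iUnion_subset fun n => ?_
      intro z hz
      have h1 : (0:ℝ) < 1 / ((n:ℝ) + 4) := by positivity
      exact ⟨h1.trans hz.1, by have := hz.2; linarith⟩
    · intro z hz
      obtain ⟨h0, h1⟩ := hz
      obtain ⟨n, hn⟩ := exists_nat_ge (max (1 / z) (1 / (1 - z)))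
      have hz1 : (0:ℝ) < 1 - z := by linarith
      have ha : 1 / z ≤ n := le_trans (le_max_left _ _) hn
      have hb : 1 / (1 - z) ≤ n := le_trans (le_max_right _ _) hn
      have e1 : z * (1 / z) = 1 := mul_one_div_cancel h0.ne'
      have e2 : (1 - z) * (1 / (1 - z)) = 1 := mul_one_div_cancel hz1.ne'
      refine mem_iUnion.mpr ⟨n, ?_, ?_⟩
      · rw [div_lt_iff₀ (by positivity)]; nlinarith
      · have : 1 / ((n:ℝ) + 4) ≤ 1 - z := by
          rw [div_le_iff₀ (by positivity)]; nlinarith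
        linarith
  have htend := tendsto_measure_iUnion_atTop (μ := κw θ β) hmono
  rw [hunion] at htend
  have hvals : ∀ n : ℕ, (κw θ β ∘ s) n
      = ENNReal.ofReal (Fw θ β (1 - 1 / (n + 4)) - Fw θ β (1 / (n + 4))) := by
    intro n
    have h4 : (0:ℝ) < (n:ℝ) + 4 := by positivity
    have h14 : 1 / ((n:ℝ) + 4) ≤ 1/4 := by
      rw [div_le_div_iff₀ h4 (by norm_num)]; linarith
    have hpos : (0:ℝ) < 1/((n:ℝ)+4) := by positivity
    exact κwIoc hθ hβ (by positivity) (by linarith) (by linarith)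
  have h1 : Tendsto (fun n : ℕ => Fw θ β (1 / (n + 4))) atTop (𝓝 0) := by
    have := (FwContAt hθ hβ (le_refl (0:ℝ)) zero_le_one).tendsto.comp (seq_tendsto 1 4)
    rw [Fw0 hθ] at this; exact this
  have h2 : Tendsto (fun n : ℕ => Fw θ β (1 - 1 / (n + 4))) atTop (𝓝 1) := by
    have hlim : Tendsto (fun n : ℕ => 1 - 1 / ((n:ℝ) + 4)) atTop (𝓝 1) := by
      have := (tendsto_const_nhds (x := (1:ℝ)) (f := atTop (α := ℕ))).sub (seq_tendsto 1 4)
      simpa using this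
    have := (FwContAt hθ hβ zero_le_one le_rfl).tendsto.comp hlim
    rw [Fw1 hθ hβ] at this; exact this
  have htend2 : Tendsto (κw θ β ∘ s) atTop (𝓝 1) := by
    rw [funext hvals]
    have h3 := h2.sub h1
    rw [sub_zero] at h3
    have := (ENNReal.continuous_ofReal.tendsto _).comp h3
    simpa [Function.comp_def] using this
  exact tendsto_nhds_unique htend htend2

end


section
variable {θ β : ℝ}

lemma expLintegral (hθ : 0 < θ) {a : ℝ} (ha : 0 < a) :
    ∫⁻ x in Ioi (0:ℝ), ENNReal.ofReal (θ * x ^ (θ - 1) * Real.exp (-(a * x ^ θ)))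
      = ENNReal.ofReal a⁻¹ := by
  rw [← ofReal_integral_eq_lintegral_ofReal (expIntegralOn hθ ha)
    ((ae_restrict_iff' measurableSet_Ioi).mpr (ae_of_all _ fun x hx => by
      have h0 : (0:ℝ) < x := hx
      positivity)), expIntegral hθ ha]

lemma muYIci (hθ : 0 < θ) (hβ : 0 < β) {m : ℝ} (hm : 0 < m) :
    ((volume.restrict (Ioi 0)).withDensity
      (fun y => ENNReal.ofReal (θ / β ^ θ * y ^ (θ - 1) * Real.exp (-((y / β) ^ θ))))) (Ici m)
      = ENNReal.ofReal (Real.exp (-((m / β) ^ θ))) := by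
  rw [withDensity_apply _ measurableSet_Ici, Measure.restrict_restrict measurableSet_Ici]
  have hset : Ici m ∩ Ioi 0 = Ici m :=
    inter_eq_left.mpr (fun y hy => hm.trans_le hy)
  rw [hset, ← Measure.restrict_congr_set Ioi_ae_eq_Ici,
    ← ofReal_integral_eq_lintegral_ofReal (survIntegrableOn hθ hβ hm)
      ((ae_restrict_iff' measurableSet_Ioi).mpr (ae_of_all _ fun y hy => by
        have h0 : (0:ℝ) < y := hm.trans hy
        positivity)), survIntegral hθ hβ hm]

lemma muYmeas (hθ : 0 < θ) (hβ : 0 < β) {c : ℝ} :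
    Measurable (fun x : ℝ => ((volume.restrict (Ioi 0)).withDensity
      (fun y => ENNReal.ofReal (θ / β ^ θ * y ^ (θ - 1) * Real.exp (-((y / β) ^ θ)))))
      (Ici (c * x))) := by
  set μY := (volume.restrict (Ioi (0:ℝ))).withDensity
      (fun y => ENNReal.ofReal (θ / β ^ θ * y ^ (θ - 1) * Real.exp (-((y / β) ^ θ))))
  have h1 : Antitone (fun m : ℝ => μY (Ici m)) :=
    fun m m' hmm' => measure_mono (Ici_subset_Ici.mpr hmm')
  exact h1.measurable.comp (measurable_id.const_mul c)

lemma densXmeas : Measurable (fun x : ℝ =>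
    ENNReal.ofReal (θ * x ^ (θ - 1) * Real.exp (-(x ^ θ)))) := by
  apply ENNReal.measurable_ofReal.comp
  fun_prop

end


theorem weibull_ratio_unit_weibull2
    {Ω : Type*} [MeasurableSpace Ω] (P : Measure Ω) [IsProbabilityMeasure P]
    (θ β : ℝ) (hθ : 0 < θ) (hβ : 0 < β)
    (X Y : Ω → ℝ) (hXm : Measurable X) (hYm : Measurable Y)
    (hindep : IndepFun X Y P)
    (hXpos : ∀ᵐ ω ∂P, 0 < X ω) (hYpos : ∀ᵐ ω ∂P, 0 < Y ω)
    (hX : P.map X = (volume.restrict (Ioi 0)).withDensity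
      (fun x => ENNReal.ofReal (θ * x ^ (θ - 1) * Real.exp (-(x ^ θ)))))
    (hY : P.map Y = (volume.restrict (Ioi 0)).withDensity
      (fun y => ENNReal.ofReal (θ / β ^ θ * y ^ (θ - 1) * Real.exp (-((y / β) ^ θ))))) :
    P.map (fun ω => X ω / (X ω + Y ω)) = (volume.restrict (Ioo 0 1)).withDensity
      (fun z => ENNReal.ofReal (θ * β ^ θ * z ^ (θ - 1) * (1 - z) ^ (θ - 1) /
        ((β * z) ^ θ + (1 - z) ^ θ) ^ 2)) := by
  show P.map (fun ω => X ω / (X ω + Y ω)) = κw θ β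
  set Z : Ω → ℝ := fun ω => X ω / (X ω + Y ω) with hZ
  have hZm : Measurable Z := hXm.div (hXm.add hYm)
  haveI : IsProbabilityMeasure (P.map Z) := Measure.isProbabilityMeasure_map hZm.aemeasurable
  haveI hPY : IsProbabilityMeasure (P.map Y) := Measure.isProbabilityMeasure_map hYm.aemeasurable
  apply Measure.ext_of_Iic
  intro t
  rw [Measure.map_apply hZm measurableSet_Iic]
  rcases le_or_gt t 0 with ht0 | ht0
  · -- t ≤ 0
    have hL : P (Z ⁻¹' Iic t) = 0 := by
      apply measure_eq_zero_iff_ae_notMem.mpr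
      filter_upwards [hXpos, hYpos] with ω hx hy
      simp only [mem_preimage, mem_Iic, not_le]
      have h1 : 0 < Z ω := div_pos hx (by linarith)
      linarith
    rw [hL, κw_apply measurableSet_Iic]
    have hset : Iic t ∩ Ioo 0 1 = (∅ : Set ℝ) := by
      ext z
      simp only [mem_inter_iff, mem_Iic, mem_Ioo, mem_empty_iff_false, iff_false, not_and]
      intro h1 h2
      linarith
    rw [hset]
    simp
  rcases lt_or_ge t 1 with ht1 | ht1
  · -- 0 < t < 1 : the main case
    set c : ℝ := (1 - t) / t with hc
    have hcpos : 0 < c := div_pos (by linarith) ht0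
    set S : Set (ℝ × ℝ) := {p : ℝ × ℝ | c * p.1 ≤ p.2} with hS
    have hSm : MeasurableSet S := measurableSet_le (measurable_fst.const_mul c) measurable_snd
    have hae : (Z ⁻¹' Iic t) =ᵐ[P] ((fun ω => (X ω, Y ω)) ⁻¹' S) := by
      rw [Filter.eventuallyEq_set]
      filter_upwards [hXpos, hYpos] with ω hx hy
      simp only [mem_preimage, mem_Iic, hS, mem_setOf_eq]
      have hxy : 0 < X ω + Y ω := by linarith
      rw [hZ]
      simp only
      rw [div_le_iff₀ hxy, hc, div_mul_eq_mul_div, div_le_iff₀ ht0]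
      constructor <;> intro h <;> nlinarith
    rw [measure_congr hae,
      ← Measure.map_apply (hXm.prodMk hYm) hSm,
      (indepFun_iff_map_prod_eq_prod_map_map hXm.aemeasurable hYm.aemeasurable).mp hindep,
      Measure.prod_apply hSm]
    have hpre : ∀ x : ℝ, (Prod.mk x ⁻¹' S) = Ici (c * x) := fun x => rfl
    simp only [hpre]
    rw [hX, hY, lintegral_withDensity_eq_lintegral_mul _ densXmeas (muYmeas hθ hβ)]
    set a : ℝ := 1 + ((1 - t) / (t * β)) ^ θ with ha
    have hapos : 0 < a := by
      have h1 : (0:ℝ) ≤ ((1 - t) / (t * β)) ^ θ :=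
        Real.rpow_nonneg (div_nonneg (by linarith) (by positivity)) θ
      rw [ha]; linarith
    have hcongr : ∫⁻ x in Ioi (0:ℝ),
        ((fun x => ENNReal.ofReal (θ * x ^ (θ - 1) * Real.exp (-(x ^ θ)))) *
          fun x => ((volume.restrict (Ioi 0)).withDensity
            (fun y => ENNReal.ofReal (θ / β ^ θ * y ^ (θ - 1) *
              Real.exp (-((y / β) ^ θ))))) (Ici (c * x))) x
        = ∫⁻ x in Ioi (0:ℝ),
          ENNReal.ofReal (θ * x ^ (θ - 1) * Real.exp (-(a * x ^ θ))) := by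
      apply setLIntegral_congr_fun measurableSet_Ioi
      intro x hx
      have hx0 : (0:ℝ) < x := hx
      simp only [Pi.mul_apply]
      rw [muYIci hθ hβ (by positivity), ← ENNReal.ofReal_mul (by positivity)]
      congr 1
      have e1 : c * x / β = (1 - t) / (t * β) * x := by
        rw [hc]; field_simp
      have e2 : ((1 - t) / (t * β) * x) ^ θ = ((1 - t) / (t * β)) ^ θ * x ^ θ :=
        Real.mul_rpow (div_nonneg (by linarith) (by positivity)) hx0.le
      rw [mul_assoc, ← Real.exp_add, e1, e2, ha]
      ring_nf
    rw [hcongr, expLintegral hθ hapos, κwIic_mid hθ hβ ht0 ht1]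
    congr 1
    -- a⁻¹ = Fw θ β t
    have hA : (0:ℝ) < (β * t) ^ θ := Real.rpow_pos_of_pos (by positivity) _
    have e3 : ((1 - t) / (t * β)) ^ θ = (1 - t) ^ θ / (t * β) ^ θ :=
      Real.div_rpow (by linarith) (by positivity) _
    have e4 : (t * β) ^ θ = (β * t) ^ θ := by rw [mul_comm]
    have hD : (0:ℝ) < (β * t) ^ θ + (1 - t) ^ θ := by
      have := Real.rpow_nonneg (show (0:ℝ) ≤ 1 - t by linarith) θ
      linarith
    have haval : a = ((β * t) ^ θ + (1 - t) ^ θ) / (β * t) ^ θ := by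
      rw [ha, e3, e4]
      field_simp
    rw [haval, inv_div, Fw]
  · -- t ≥ 1
    have hL : P (Z ⁻¹' Iic t) = 1 := by
      rw [← measure_univ (μ := P)]
      apply measure_congr
      apply ae_eq_univ.mpr
      filter_upwards [hXpos, hYpos] with ω hx hy
      simp only [mem_preimage, mem_Iic]
      have hxy : 0 < X ω + Y ω := by linarith
      have h1 : Z ω < 1 := by
        rw [hZ]
        simp only
        rw [div_lt_one hxy]
        linarith
      linarith
    rw [hL, κw_apply measurableSet_Iic]
    have hset : Iic t ∩ Ioo 0 1 = Ioo 0 1 := by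
      apply inter_eq_right.mpr
      intro z hz
      simp only [mem_Iic]
      linarith [hz.2]
    rw [hset]
    have htot := κwTotal hθ hβ (β := β)
    rw [κw_apply measurableSet_Ioo, inter_self] at htot
    exact htot.symm
end

section
/- Let α₁, β₁, λ₁, α₂, β₂, λ₂ > 0. Let X and Y be independent random variables on a probability space, each almost surely positive, where X has the generalized beta-prime density f_X(x) = λ₁^{α₁} * x^{α₁-1} * (1+λ₁*x)^{-(α₁+β₁)} / B(α₁,β₁) and Y has the generalized beta-prime density f_Y(y) = λ₂^{α₂} * y^{α₂-1} * (1+λ₂*y)^{-(α₂+β₂)} / B(α₂,β₂). Set K = B(α₁+α₂, β₁+β₂) * λ₁^{α₁} / (B(α₁,β₁) * B(α₂,β₂) * λ₂^{α₁}). Then Z = X/(X+Y) has density, for z ∈ (0,1), f_Z(z) = K * (z^{α₁-1}/(1-z)^{α₁+1}) * ₂F₁(α₁+β₁, α₁+α₂; α₁+α₂+β₁+β₂; 1 - (λ₁/λ₂)*(z/(1-z))), where for w < 1 the hypergeometric value is given by the Euler integral ₂F₁(a,b;c;w) = (Γ(c)/(Γ(b)*Γ(c-b))) * ∫_0^1 t^{b-1}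 * (1-t)^{c-b-1} * (1-w*t)^{-a} dt. -/
open MeasureTheory ProbabilityTheory Real Set

/-- The Gauss hypergeometric function ₂F₁(a, b; c; w), given for w < 1 (and c > b > 0)
by the Euler integral representation. -/
noncomputable def twoFOne (a b c w : ℝ) : ℝ :=
  Real.Gamma c / (Real.Gamma b * Real.Gamma (c - b)) *
    ∫ t in Ioo (0:ℝ) 1, t ^ (b - 1) * (1 - t) ^ (c - b - 1) * (1 - w * t) ^ (-a)

section Aux

lemma my_lintegral_cov {s : Set ℝ} {f : ℝ → ℝ} {f' : ℝ → ℝ}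
    (hs : MeasurableSet s) (hf' : ∀ x ∈ s, HasDerivWithinAt f (f' x) s x)
    (hf : InjOn f s) (g : ℝ → ENNReal) :
    ∫⁻ x in f '' s, g x = ∫⁻ x in s, ENNReal.ofReal |f' x| * g (f x) := by
  simpa only [ContinuousLinearMap.det_toSpanSingleton] using
    MeasureTheory.lintegral_image_eq_lintegral_abs_det_fderiv_mul volume hs
      (fun x hx => (hf' x hx).hasFDerivWithinAt) hf g

lemma covA (c : ℝ) (hc : 0 < c) (g : ℝ → ENNReal) :
    ∫⁻ x in Ioi (0:ℝ), g x
      = ∫⁻ z in Ioo (0:ℝ) 1, ENNReal.ofReal (c / (1-z)^2) * g (c * (z / (1-z))) := by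
  have himg : (fun z : ℝ => c * (z / (1-z))) '' Ioo 0 1 = Ioi 0 := by
    ext x
    constructor
    · rintro ⟨z, ⟨hz0, hz1⟩, rfl⟩
      have h1z : 0 < 1 - z := by linarith
      exact mul_pos hc (div_pos hz0 h1z)
    · intro hx
      refine ⟨x / (x + c), ⟨div_pos hx (by linarith [mem_Ioi.mp hx]), ?_⟩, ?_⟩
      · rw [div_lt_one (by linarith [mem_Ioi.mp hx])]; linarith
      · have hx0 : (0:ℝ) < x := hx
        have hxc : (0:ℝ) < x + c := by linarith
        field_simp
        rw [add_sub_cancel_left]; exact div_self hc.ne'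
  have hderiv : ∀ z ∈ Ioo (0:ℝ) 1,
      HasDerivWithinAt (fun z : ℝ => c * (z / (1-z))) (c / (1-z)^2) (Ioo 0 1) z := by
    intro z hz
    have h1z : (1:ℝ) - z ≠ 0 := by
      have := hz.2; intro h; simp only [sub_eq_zero] at h; linarith
    have h : HasDerivAt (fun z : ℝ => z / (1-z)) ((1*(1-z) - z*(0-1)) / (1-z)^2) z :=
      (hasDerivAt_id z).div ((hasDerivAt_const z 1).sub (hasDerivAt_id z)) h1z
    have h2 := (h.const_mul c).hasDerivWithinAt (s := Ioo 0 1)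
    rw [show (c / (1-z)^2) = c * ((1*(1-z) - z*(0-1)) / (1-z)^2) by ring]
    exact h2
  have hinj : InjOn (fun z : ℝ => c * (z / (1-z))) (Ioo 0 1) := by
    intro a ha b hb hab
    have h1a : (1:ℝ) - a ≠ 0 := by have := ha.2; intro h; simp only [sub_eq_zero] at h; linarith
    have h1b : (1:ℝ) - b ≠ 0 := by have := hb.2; intro h; simp only [sub_eq_zero] at h; linarith
    simp only [] at hab
    have := mul_left_cancel₀ (ne_of_gt hc) hab
    field_simp at this
    linarith
  rw [← himg, my_lintegral_cov measurableSet_Ioo hderiv hinj g]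
  refine setLIntegral_congr_fun measurableSet_Ioo (fun z hz => ?_)
  have h1z : (0:ℝ) < 1 - z := by linarith [hz.2]
  rw [abs_of_pos (div_pos hc (pow_pos h1z 2))]

lemma betaIntOn {p q : ℝ} (hp : -1 < p) (hq : -1 < q) :
    IntegrableOn (fun u : ℝ => u ^ p * (1-u) ^ q) (Ioo (0:ℝ) 1) := by
  have h := Complex.betaIntegral_convergent (u := (p+1 : ℂ)) (v := (q+1 : ℂ))
    (by simp; linarith) (by simp; linarith)
  have h2 := h.norm
  rw [intervalIntegrable_iff] at h2
  have h3 : IntegrableOn (fun x : ℝ => ‖(x:ℂ) ^ ((p:ℂ)+1-1) * (1-(x:ℂ)) ^ ((q:ℂ)+1-1)‖)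
      (Ioo (0:ℝ) 1) := h2.mono_set
        (by rw [uIoc_of_le (by norm_num : (0:ℝ) ≤ 1)]; exact Ioo_subset_Ioc_self)
  refine (h3.congr_fun (fun x hx => ?_) measurableSet_Ioo)
  have hx0 : (0:ℝ) < x := hx.1
  have hx1 : (0:ℝ) < 1 - x := by linarith [hx.2]
  beta_reduce; rw [norm_mul]
  have e1 : ‖(x:ℂ) ^ ((p:ℂ)+1-1)‖ = x ^ p := by
    rw [Complex.norm_cpow_eq_rpow_re_of_pos hx0]
    norm_num
  have e2 : ‖(1-(x:ℂ)) ^ ((q:ℂ)+1-1)‖ = (1-x) ^ q := by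
    have : (1 - (x:ℂ)) = ((1 - x : ℝ) : ℂ) := by push_cast; ring
    rw [this, Complex.norm_cpow_eq_rpow_re_of_pos hx1]
    norm_num
  rw [e1, e2]

lemma one_sub_mul_ge {w u : ℝ} (hu : u ∈ Ioo (0:ℝ) 1) :
    min 1 (1-w) ≤ 1 - w * u := by
  rcases le_or_gt 0 w with h | h
  · have : w * u ≤ w * 1 := by nlinarith [hu.2.le]
    calc min 1 (1-w) ≤ 1 - w := min_le_right _ _
    _ ≤ 1 - w * u := by nlinarith
  · have : w * u ≤ 0 := mul_nonpos_of_nonpos_of_nonneg h.le hu.1.le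
    calc min 1 (1-w) ≤ 1 := min_le_left _ _
    _ ≤ 1 - w * u := by linarith

lemma EIntOn {p q a w : ℝ} (hp : -1 < p) (hq : -1 < q) (ha : 0 < a) (hw : w < 1) :
    IntegrableOn (fun u : ℝ => u ^ p * (1-u) ^ q * (1 - w * u) ^ (-a)) (Ioo (0:ℝ) 1) := by
  have hm : (0:ℝ) < min 1 (1-w) := lt_min one_pos (by linarith)
  refine Integrable.mono' ((betaIntOn hp hq).const_mul ((min 1 (1-w)) ^ (-a))) ?_ ?_
  · apply Measurable.aestronglyMeasurable
    exact ((measurable_id.pow_const p).mul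
      ((measurable_const.sub measurable_id).pow_const q)).mul
      ((measurable_const.sub (measurable_id.const_mul w)).pow_const (-a))
  · filter_upwards [ae_restrict_mem measurableSet_Ioo] with u hu
    have hu0 : (0:ℝ) < u := hu.1
    have hu1 : (0:ℝ) < 1 - u := by linarith [hu.2]
    have h1 : (0:ℝ) < 1 - w * u := lt_of_lt_of_le hm (one_sub_mul_ge hu)
    have h2 : (1 - w * u) ^ (-a) ≤ (min 1 (1-w)) ^ (-a) :=
      Real.rpow_le_rpow_of_nonpos hm (one_sub_mul_ge hu) (by linarith)
    rw [Real.norm_eq_abs, abs_of_nonneg (by positivity)]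
    calc u ^ p * (1-u) ^ q * (1 - w * u) ^ (-a)
        ≤ u ^ p * (1-u) ^ q * (min 1 (1-w)) ^ (-a) := by
          apply mul_le_mul_of_nonneg_left h2 (by positivity)
    _ = (min 1 (1-w)) ^ (-a) * (u ^ p * (1-u) ^ q) := by ring

lemma key_identity (α₁ β₁ lam₁ α₂ β₂ lam₂ b1 b2 z u : ℝ)
    (hα₁ : 0 < α₁) (hβ₁ : 0 < β₁) (hlam₁ : 0 < lam₁)
    (hα₂ : 0 < α₂) (hβ₂ : 0 < β₂) (hlam₂ : 0 < lam₂)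
    (hb1 : b1 ≠ 0) (hb2 : b2 ≠ 0) (hz : z ∈ Ioo (0:ℝ) 1) (hu : u ∈ Ioo (0:ℝ) 1) :
    lam₂⁻¹ / (1-u)^2 *
      ((lam₂⁻¹ * (u / (1-u))) / (1-z)^2 *
        ((lam₁ ^ α₁ * ((lam₂⁻¹ * (u / (1-u))) * (z / (1-z))) ^ (α₁-1) *
            (1 + lam₁ * ((lam₂⁻¹ * (u / (1-u))) * (z / (1-z)))) ^ (-(α₁+β₁)) / b1) *
         (lam₂ ^ α₂ * (lam₂⁻¹ * (u / (1-u))) ^ (α₂-1) *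
            (1 + lam₂ * (lam₂⁻¹ * (u / (1-u)))) ^ (-(α₂+β₂)) / b2)))
    = (lam₁ ^ α₁ / (b1 * b2 * lam₂ ^ α₁) * (z ^ (α₁-1) / (1-z) ^ (α₁+1))) *
        (u ^ (α₁+α₂-1) * (1-u) ^ (β₁+β₂-1) *
          (1 - (1 - lam₁ / lam₂ * (z / (1-z))) * u) ^ (-(α₁+β₁))) := by
  obtain ⟨hz0, hz1⟩ := hz
  obtain ⟨hu0, hu1⟩ := hu
  have h1z : (0:ℝ) < 1 - z := by linarith
  have h1u : (0:ℝ) < 1 - u := by linarith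
  set w : ℝ := 1 - lam₁ / lam₂ * (z / (1-z)) with hw
  have hwu : (0:ℝ) < 1 - w * u := by
    have : 1 - w * u = (1 - u) + lam₁ / lam₂ * (z / (1-z)) * u := by rw [hw]; ring
    rw [this]
    have : 0 < lam₁ / lam₂ * (z / (1-z)) * u := by positivity
    linarith
  have id3 : (lam₂⁻¹ * (u / (1-u))) * (z / (1-z)) = (z*u) / ((1-z)*(lam₂*(1-u))) := by
    field_simp
  have idyu : lam₂⁻¹ * (u / (1-u)) = u / (lam₂*(1-u)) := by field_simp
  have id2 : 1 + lam₁ * ((z*u) / ((1-z)*(lam₂*(1-u)))) = (1 - w*u) / (1-u) := by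
    rw [hw]; field_simp; ring
  have id1 : 1 + lam₂ * (u / (lam₂*(1-u))) = (1-u)⁻¹ := by
    field_simp
    ring
  rw [id3, id2, idyu, id1]
  rw [Real.div_rpow (by positivity) (by positivity : (0:ℝ) ≤ (1-z)*(lam₂*(1-u))),
      Real.mul_rpow hz0.le hu0.le,
      Real.mul_rpow h1z.le (by positivity : (0:ℝ) ≤ lam₂*(1-u)),
      Real.mul_rpow hlam₂.le h1u.le,
      Real.rpow_neg (by positivity : (0:ℝ) ≤ (1-w*u)/(1-u)),
      Real.div_rpow hwu.le h1u.le,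
      Real.div_rpow hu0.le (by positivity : (0:ℝ) ≤ lam₂*(1-u)),
      Real.inv_rpow h1u.le,
      Real.rpow_neg h1u.le (α₂+β₂),
      Real.rpow_neg hwu.le]
  rw [Real.mul_rpow hlam₂.le h1u.le]
  have du : u ^ (α₁+α₂-1) = u ^ (α₁-1) * u ^ (α₂-1) * u := by
    rw [show α₁+α₂-1 = ((α₁-1) + (α₂-1)) + 1 by ring, Real.rpow_add hu0,
      Real.rpow_add hu0, Real.rpow_one]
  have dz : (1-z) ^ (α₁+1) = (1-z) ^ (α₁-1) * ((1-z) * (1-z)) := by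
    rw [show α₁+1 = ((α₁-1) + 1) + 1 by ring, Real.rpow_add h1z,
      Real.rpow_add h1z, Real.rpow_one]
    ring
  have d1u : (1-u) ^ (β₁+β₂-1) =
      (1-u) ^ (α₁+β₁) * (1-u) ^ (α₂+β₂) /
        ((1-u) ^ (α₁-1) * (1-u) ^ (α₂-1) * ((1-u) * (1-u) * (1-u))) := by
    rw [show β₁+β₂-1 = ((α₁+β₁) + (α₂+β₂)) - (((α₁-1) + (α₂-1)) + (1 + 1 + 1)) by ring,
      Real.rpow_sub h1u, Real.rpow_add h1u, Real.rpow_add h1u, Real.rpow_add h1u,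
      Real.rpow_add h1u, Real.rpow_add h1u]
    rw [show (1:ℝ)+1+1 = ((3:ℕ):ℝ) by norm_num, Real.rpow_natCast]
    ring
  have dl : lam₂ ^ α₁ = lam₂ ^ (α₁-1) * lam₂ := by
    rw [show α₁ = (α₁-1) + 1 by ring, Real.rpow_add hlam₂, Real.rpow_one]
    rw [show α₁ - 1 + 1 - 1 = α₁ - 1 by ring]
  have dl2 : lam₂ ^ α₂ = lam₂ ^ (α₂-1) * lam₂ := by
    rw [show α₂ = (α₂-1) + 1 by ring, Real.rpow_add hlam₂, Real.rpow_one]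
    rw [show α₂ - 1 + 1 - 1 = α₂ - 1 by ring]
  rw [du, dz, d1u, dl, dl2]
  have n1 : z ^ (α₁-1) ≠ 0 := (Real.rpow_pos_of_pos hz0 _).ne'
  have n2 : u ^ (α₁-1) ≠ 0 := (Real.rpow_pos_of_pos hu0 _).ne'
  have n3 : u ^ (α₂-1) ≠ 0 := (Real.rpow_pos_of_pos hu0 _).ne'
  have n4 : (1-z) ^ (α₁-1) ≠ 0 := (Real.rpow_pos_of_pos h1z _).ne'
  have n5 : (1-u) ^ (α₁-1) ≠ 0 := (Real.rpow_pos_of_pos h1u _).ne'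
  have n6 : (1-u) ^ (α₂-1) ≠ 0 := (Real.rpow_pos_of_pos h1u _).ne'
  have n7 : (1-u) ^ (α₁+β₁) ≠ 0 := (Real.rpow_pos_of_pos h1u _).ne'
  have n8 : (1-u) ^ (α₂+β₂) ≠ 0 := (Real.rpow_pos_of_pos h1u _).ne'
  have n9 : (1-w*u) ^ (α₁+β₁) ≠ 0 := (Real.rpow_pos_of_pos hwu _).ne'
  have n10 : lam₂ ^ (α₁-1) ≠ 0 := (Real.rpow_pos_of_pos hlam₂ _).ne'
  have n11 : lam₂ ^ (α₂-1) ≠ 0 := (Real.rpow_pos_of_pos hlam₂ _).ne'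
  field_simp

lemma innerF (α₁ β₁ lam₁ α₂ β₂ lam₂ K z : ℝ)
    (hα₁ : 0 < α₁) (hβ₁ : 0 < β₁) (hlam₁ : 0 < lam₁)
    (hα₂ : 0 < α₂) (hβ₂ : 0 < β₂) (hlam₂ : 0 < lam₂)
    (hK : K = (Real.Gamma (α₁ + α₂) * Real.Gamma (β₁ + β₂) /
        Real.Gamma (α₁ + α₂ + β₁ + β₂)) * lam₁ ^ α₁ /
      ((Real.Gamma α₁ * Real.Gamma β₁ / Real.Gamma (α₁ + β₁)) *
       (Real.Gamma α₂ * Real.Gamma β₂ / Real.Gamma (α₂ + β₂)) * lam₂ ^ α₁))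
    (hz : z ∈ Ioo (0:ℝ) 1) :
    ∫⁻ y in Ioi (0:ℝ),
      ENNReal.ofReal (y / (1-z)^2) *
        (ENNReal.ofReal (lam₁ ^ α₁ * (y * (z / (1-z))) ^ (α₁-1) *
            (1 + lam₁ * (y * (z / (1-z)))) ^ (-(α₁+β₁)) /
              (Real.Gamma α₁ * Real.Gamma β₁ / Real.Gamma (α₁+β₁))) *
         ENNReal.ofReal (lam₂ ^ α₂ * y ^ (α₂-1) * (1 + lam₂ * y) ^ (-(α₂+β₂)) /
              (Real.Gamma α₂ * Real.Gamma β₂ / Real.Gamma (α₂+β₂))))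
    = ENNReal.ofReal (K * (z ^ (α₁-1) / (1-z) ^ (α₁+1)) *
        twoFOne (α₁+β₁) (α₁+α₂) (α₁+α₂+β₁+β₂) (1 - lam₁ / lam₂ * (z / (1-z)))) := by
  obtain ⟨hz0, hz1⟩ := hz
  have h1z : (0:ℝ) < 1 - z := by linarith
  have hG1 : 0 < Real.Gamma α₁ := Real.Gamma_pos_of_pos hα₁
  have hG2 : 0 < Real.Gamma β₁ := Real.Gamma_pos_of_pos hβ₁
  have hG3 : 0 < Real.Gamma (α₁+β₁) := Real.Gamma_pos_of_pos (by linarith)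
  have hG4 : 0 < Real.Gamma α₂ := Real.Gamma_pos_of_pos hα₂
  have hG5 : 0 < Real.Gamma β₂ := Real.Gamma_pos_of_pos hβ₂
  have hG6 : 0 < Real.Gamma (α₂+β₂) := Real.Gamma_pos_of_pos (by linarith)
  have hG7 : 0 < Real.Gamma (α₁+α₂) := Real.Gamma_pos_of_pos (by linarith)
  have hG8 : 0 < Real.Gamma (β₁+β₂) := Real.Gamma_pos_of_pos (by linarith)
  have hG9 : 0 < Real.Gamma (α₁+α₂+β₁+β₂) := Real.Gamma_pos_of_pos (by linarith)
  set b1 : ℝ := Real.Gamma α₁ * Real.Gamma β₁ / Real.Gamma (α₁+β₁) with hb1def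
  set b2 : ℝ := Real.Gamma α₂ * Real.Gamma β₂ / Real.Gamma (α₂+β₂) with hb2def
  have hb1 : 0 < b1 := by positivity
  have hb2 : 0 < b2 := by positivity
  set w : ℝ := 1 - lam₁ / lam₂ * (z / (1-z)) with hwdef
  have hw1 : w < 1 := by
    have : 0 < lam₁ / lam₂ * (z / (1-z)) := by positivity
    rw [hwdef]; linarith
  set D : ℝ := lam₁ ^ α₁ / (b1 * b2 * lam₂ ^ α₁) * (z ^ (α₁-1) / (1-z) ^ (α₁+1)) with hDdef
  have hD : 0 ≤ D := by positivity
  rw [covA lam₂⁻¹ (inv_pos.mpr hlam₂)]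
  have step1 : ∀ u ∈ Ioo (0:ℝ) 1,
      ENNReal.ofReal (lam₂⁻¹ / (1-u)^2) *
        (ENNReal.ofReal ((lam₂⁻¹ * (u / (1-u))) / (1-z)^2) *
          (ENNReal.ofReal (lam₁ ^ α₁ * ((lam₂⁻¹ * (u / (1-u))) * (z / (1-z))) ^ (α₁-1) *
              (1 + lam₁ * ((lam₂⁻¹ * (u / (1-u))) * (z / (1-z)))) ^ (-(α₁+β₁)) / b1) *
           ENNReal.ofReal (lam₂ ^ α₂ * (lam₂⁻¹ * (u / (1-u))) ^ (α₂-1) *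
              (1 + lam₂ * (lam₂⁻¹ * (u / (1-u)))) ^ (-(α₂+β₂)) / b2)))
      = ENNReal.ofReal (D * (u ^ (α₁+α₂-1) * (1-u) ^ (β₁+β₂-1) * (1 - w*u) ^ (-(α₁+β₁)))) := by
    intro u hu
    obtain ⟨hu0, hu1⟩ := hu
    have h1u : (0:ℝ) < 1 - u := by linarith
    have hyu : (0:ℝ) ≤ lam₂⁻¹ * (u / (1-u)) := by positivity
    have he1 : (0:ℝ) ≤ lam₁ ^ α₁ * ((lam₂⁻¹ * (u / (1-u))) * (z / (1-z))) ^ (α₁-1) *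
        (1 + lam₁ * ((lam₂⁻¹ * (u / (1-u))) * (z / (1-z)))) ^ (-(α₁+β₁)) / b1 := by
      have harg : (0:ℝ) ≤ (lam₂⁻¹ * (u / (1-u))) * (z / (1-z)) := by positivity
      have h1l : (0:ℝ) ≤ 1 + lam₁ * ((lam₂⁻¹ * (u / (1-u))) * (z / (1-z))) := by positivity
      exact div_nonneg (mul_nonneg (mul_nonneg (Real.rpow_nonneg hlam₁.le _)
        (Real.rpow_nonneg harg _)) (Real.rpow_nonneg h1l _)) hb1.le
    rw [← ENNReal.ofReal_mul he1, ← ENNReal.ofReal_mul (by positivity :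
        (0:ℝ) ≤ (lam₂⁻¹ * (u / (1-u))) / (1-z)^2),
      ← ENNReal.ofReal_mul (by positivity : (0:ℝ) ≤ lam₂⁻¹ / (1-u)^2)]
    exact congrArg ENNReal.ofReal
      (key_identity α₁ β₁ lam₁ α₂ β₂ lam₂ b1 b2 z u hα₁ hβ₁ hlam₁ hα₂ hβ₂ hlam₂
        hb1.ne' hb2.ne' ⟨hz0, hz1⟩ ⟨hu0, hu1⟩)
  rw [setLIntegral_congr_fun measurableSet_Ioo step1]
  simp_rw [ENNReal.ofReal_mul hD]
  rw [lintegral_const_mul' _ _ ENNReal.ofReal_ne_top]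
  have hInt : IntegrableOn
      (fun u : ℝ => u ^ (α₁+α₂-1) * (1-u) ^ (β₁+β₂-1) * (1 - w*u) ^ (-(α₁+β₁)))
      (Ioo (0:ℝ) 1) := EIntOn (by linarith) (by linarith) (by linarith) hw1
  rw [← ofReal_integral_eq_lintegral_ofReal hInt ?nonneg]
  case nonneg =>
    filter_upwards [ae_restrict_mem measurableSet_Ioo] with u hu
    have hu0 : (0:ℝ) < u := hu.1
    have h1u : (0:ℝ) < 1 - u := by linarith [hu.2]
    have hwu : (0:ℝ) ≤ 1 - w * u := by
      have : 1 - w * u = (1 - u) + lam₁ / lam₂ * (z / (1-z)) * u := by rw [hwdef]; ring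
      rw [this]
      have : 0 ≤ lam₁ / lam₂ * (z / (1-z)) * u := by positivity
      linarith
    positivity
  rw [← ENNReal.ofReal_mul hD]
  congr 1
  rw [twoFOne]
  simp only [show α₁+α₂+β₁+β₂-(α₁+α₂)-1 = β₁+β₂-1 from by ring]
  rw [show α₁+α₂+β₁+β₂-(α₁+α₂) = β₁+β₂ from by ring]
  rw [hDdef, hK, hb1def, hb2def]
  have hl1 : (0:ℝ) < lam₁ ^ α₁ := Real.rpow_pos_of_pos hlam₁ _
  have hl2 : (0:ℝ) < lam₂ ^ α₁ := Real.rpow_pos_of_pos hlam₂ _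
  have hz2 : (0:ℝ) < z ^ (α₁-1) := Real.rpow_pos_of_pos hz0 _
  have hz3 : (0:ℝ) < (1-z) ^ (α₁+1) := Real.rpow_pos_of_pos h1z _
  field_simp
  ring_nf
  simp_rw [mul_comm _ w]

lemma myWithDensityProd {μ ν : Measure ℝ} [SigmaFinite μ] [SigmaFinite ν]
    {f g : ℝ → ENNReal} (hf : Measurable f) (hg : Measurable g)
    [SigmaFinite (μ.withDensity f)] [SigmaFinite (ν.withDensity g)] :
    (μ.withDensity f).prod (ν.withDensity g)
      = (μ.prod ν).withDensity (fun p => f p.1 * g p.2) := by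
  refine Measure.prod_eq fun s t hs ht => ?_
  rw [withDensity_apply _ (hs.prod ht), ← Measure.prod_restrict,
    lintegral_prod_mul hf.aemeasurable hg.aemeasurable,
    withDensity_apply _ hs, withDensity_apply _ ht]

lemma main_calc (α₁ β₁ lam₁ α₂ β₂ lam₂ K : ℝ)
    (hα₁ : 0 < α₁) (hβ₁ : 0 < β₁) (hlam₁ : 0 < lam₁)
    (hα₂ : 0 < α₂) (hβ₂ : 0 < β₂) (hlam₂ : 0 < lam₂)
    (hK : K = (Real.Gamma (α₁ + α₂) * Real.Gamma (β₁ + β₂) /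
        Real.Gamma (α₁ + α₂ + β₁ + β₂)) * lam₁ ^ α₁ /
      ((Real.Gamma α₁ * Real.Gamma β₁ / Real.Gamma (α₁ + β₁)) *
       (Real.Gamma α₂ * Real.Gamma β₂ / Real.Gamma (α₂ + β₂)) * lam₂ ^ α₁))
    (s : Set ℝ) (hs : MeasurableSet s) :
    ∫⁻ p in ((fun q : ℝ × ℝ => q.1 / (q.1 + q.2)) ⁻¹' s),
        ENNReal.ofReal (lam₁ ^ α₁ * p.1 ^ (α₁ - 1) * (1 + lam₁ * p.1) ^ (-(α₁ + β₁)) /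
          (Real.Gamma α₁ * Real.Gamma β₁ / Real.Gamma (α₁ + β₁))) *
        ENNReal.ofReal (lam₂ ^ α₂ * p.2 ^ (α₂ - 1) * (1 + lam₂ * p.2) ^ (-(α₂ + β₂)) /
          (Real.Gamma α₂ * Real.Gamma β₂ / Real.Gamma (α₂ + β₂)))
        ∂((volume.restrict (Ioi 0)).prod (volume.restrict (Ioi 0)))
      = ((volume.restrict (Ioo 0 1)).withDensity
          (fun z => ENNReal.ofReal (K * (z ^ (α₁ - 1) / (1 - z) ^ (α₁ + 1)) *
            twoFOne (α₁ + β₁) (α₁ + α₂) (α₁ + α₂ + β₁ + β₂)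
              (1 - lam₁ / lam₂ * (z / (1 - z)))))) s := by
  have hφ : Measurable (fun q : ℝ × ℝ => q.1 / (q.1 + q.2)) :=
    measurable_fst.div (measurable_fst.add measurable_snd)
  have hf₁m : Measurable (fun x : ℝ => ENNReal.ofReal (lam₁ ^ α₁ * x ^ (α₁ - 1) *
      (1 + lam₁ * x) ^ (-(α₁ + β₁)) /
        (Real.Gamma α₁ * Real.Gamma β₁ / Real.Gamma (α₁ + β₁)))) := by
    apply Measurable.ennreal_ofReal
    exact (((measurable_id.pow_const (α₁-1)).const_mul (lam₁ ^ α₁)).mul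
      (((measurable_id.const_mul lam₁).const_add 1).pow_const (-(α₁+β₁)))).div_const _
  have hf₂m : Measurable (fun x : ℝ => ENNReal.ofReal (lam₂ ^ α₂ * x ^ (α₂ - 1) *
      (1 + lam₂ * x) ^ (-(α₂ + β₂)) /
        (Real.Gamma α₂ * Real.Gamma β₂ / Real.Gamma (α₂ + β₂)))) := by
    apply Measurable.ennreal_ofReal
    exact (((measurable_id.pow_const (α₂-1)).const_mul (lam₂ ^ α₂)).mul
      (((measurable_id.const_mul lam₂).const_add 1).pow_const (-(α₂+β₂)))).div_const _
  set F : ℝ × ℝ → ENNReal := fun p =>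
      ENNReal.ofReal (lam₁ ^ α₁ * p.1 ^ (α₁ - 1) * (1 + lam₁ * p.1) ^ (-(α₁ + β₁)) /
        (Real.Gamma α₁ * Real.Gamma β₁ / Real.Gamma (α₁ + β₁))) *
      ENNReal.ofReal (lam₂ ^ α₂ * p.2 ^ (α₂ - 1) * (1 + lam₂ * p.2) ^ (-(α₂ + β₂)) /
        (Real.Gamma α₂ * Real.Gamma β₂ / Real.Gamma (α₂ + β₂))) with hFdef
  have hFm : Measurable F := (hf₁m.comp measurable_fst).mul (hf₂m.comp measurable_snd)
  set H : ℝ → ℝ → ENNReal := fun y z =>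
      s.indicator 1 z * (ENNReal.ofReal (y / (1 - z) ^ 2) *
        (ENNReal.ofReal (lam₁ ^ α₁ * (y * (z / (1 - z))) ^ (α₁ - 1) *
            (1 + lam₁ * (y * (z / (1 - z)))) ^ (-(α₁ + β₁)) /
              (Real.Gamma α₁ * Real.Gamma β₁ / Real.Gamma (α₁ + β₁))) *
         ENNReal.ofReal (lam₂ ^ α₂ * y ^ (α₂ - 1) * (1 + lam₂ * y) ^ (-(α₂ + β₂)) /
              (Real.Gamma α₂ * Real.Gamma β₂ / Real.Gamma (α₂ + β₂))))) with hHdef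
  have hHm : Measurable (Function.uncurry H) := by
    apply Measurable.mul
    · exact (measurable_one.indicator hs).comp measurable_snd
    · refine Measurable.mul (M := ENNReal) ?_ (Measurable.mul (M := ENNReal) ?_ ?_)
      · exact (measurable_fst.div
          ((measurable_const.sub measurable_snd).pow_const 2)).ennreal_ofReal
      · exact hf₁m.comp (measurable_fst.mul
          (measurable_snd.div (measurable_const.sub measurable_snd)))
      · exact hf₂m.comp measurable_fst
  have hind_ne : ∀ z : ℝ, s.indicator (1 : ℝ → ENNReal) z ≠ ⊤ := fun z => by
    by_cases h : z ∈ s <;> simp [h]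
  calc
    ∫⁻ p in ((fun q : ℝ × ℝ => q.1 / (q.1 + q.2)) ⁻¹' s), F p
        ∂((volume.restrict (Ioi 0)).prod (volume.restrict (Ioi 0)))
      = ∫⁻ p, ((fun q : ℝ × ℝ => q.1 / (q.1 + q.2)) ⁻¹' s).indicator F p
        ∂((volume.restrict (Ioi 0)).prod (volume.restrict (Ioi 0))) := by
        rw [lintegral_indicator (hφ hs)]
    _ = ∫⁻ y, ∫⁻ x, ((fun q : ℝ × ℝ => q.1 / (q.1 + q.2)) ⁻¹' s).indicator F (x, y)
          ∂(volume.restrict (Ioi 0)) ∂(volume.restrict (Ioi 0)) :=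
        lintegral_prod_symm _ (hFm.indicator (hφ hs)).aemeasurable
    _ = ∫⁻ y, (∫⁻ z in Ioo (0:ℝ) 1, H y z) ∂(volume.restrict (Ioi 0)) := by
        refine lintegral_congr_ae ?_
        filter_upwards [ae_restrict_mem measurableSet_Ioi] with y hy
        have hy0 : (0:ℝ) < y := hy
        refine (covA y hy0 _).trans ?_
        refine setLIntegral_congr_fun measurableSet_Ioo
          (fun z hz => ?_)
        obtain ⟨hz0, hz1⟩ := hz
        have h1z : (0:ℝ) < 1 - z := by linarith
        have hφpt : (y * (z / (1 - z))) / ((y * (z / (1 - z))) + y) = z := by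
          rw [show y * (z / (1 - z)) + y = y / (1 - z) by field_simp; ring]
          rw [div_eq_iff (by positivity : (y:ℝ)/(1-z) ≠ 0)]
          field_simp
        by_cases hzs : z ∈ s
        · have hmem : (y * (z / (1 - z)), y) ∈ (fun q : ℝ × ℝ => q.1 / (q.1 + q.2)) ⁻¹' s := by
            simp only [Set.mem_preimage]
            simpa only [hφpt] using hzs
          rw [Set.indicator_of_mem hmem]
          rw [hHdef]
          simp only [Set.indicator_of_mem hzs, Pi.one_apply, one_mul, hFdef]
        · have hmem : (y * (z / (1 - z)), y) ∉ (fun q : ℝ × ℝ => q.1 / (q.1 + q.2)) ⁻¹' s := by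
            simp only [Set.mem_preimage]
            simpa only [hφpt] using hzs
          rw [Set.indicator_of_notMem hmem, hHdef]
          simp only [Set.indicator_of_notMem hzs, zero_mul, mul_zero]
    _ = ∫⁻ z in Ioo (0:ℝ) 1, (∫⁻ y in Ioi (0:ℝ), H y z) :=
        lintegral_lintegral_swap hHm.aemeasurable
    _ = ∫⁻ z in Ioo (0:ℝ) 1, s.indicator 1 z *
          ENNReal.ofReal (K * (z ^ (α₁ - 1) / (1 - z) ^ (α₁ + 1)) *
            twoFOne (α₁ + β₁) (α₁ + α₂) (α₁ + α₂ + β₁ + β₂)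
              (1 - lam₁ / lam₂ * (z / (1 - z)))) := by
        refine lintegral_congr_ae ?_
        filter_upwards [ae_restrict_mem measurableSet_Ioo] with z hz
        rw [hHdef]
        rw [lintegral_const_mul' _ _ (hind_ne z)]
        rw [innerF α₁ β₁ lam₁ α₂ β₂ lam₂ K z hα₁ hβ₁ hlam₁ hα₂ hβ₂ hlam₂ hK hz]
    _ = ((volume.restrict (Ioo 0 1)).withDensity
          (fun z => ENNReal.ofReal (K * (z ^ (α₁ - 1) / (1 - z) ^ (α₁ + 1)) *
            twoFOne (α₁ + β₁) (α₁ + α₂) (α₁ + α₂ + β₁ + β₂)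
              (1 - lam₁ / lam₂ * (z / (1 - z)))))) s := by
        rw [withDensity_apply _ hs]
        have hpt : ∀ z : ℝ, s.indicator (1 : ℝ → ENNReal) z *
            ENNReal.ofReal (K * (z ^ (α₁ - 1) / (1 - z) ^ (α₁ + 1)) *
              twoFOne (α₁ + β₁) (α₁ + α₂) (α₁ + α₂ + β₁ + β₂)
                (1 - lam₁ / lam₂ * (z / (1 - z))))
            = s.indicator (fun z => ENNReal.ofReal (K * (z ^ (α₁ - 1) / (1 - z) ^ (α₁ + 1)) *
              twoFOne (α₁ + β₁) (α₁ + α₂) (α₁ + α₂ + β₁ + β₂)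
                (1 - lam₁ / lam₂ * (z / (1 - z))))) z := fun z => by
          by_cases h : z ∈ s <;> simp [h]
        simp_rw [hpt]
        rw [lintegral_indicator hs]

end Aux

theorem generalized_beta_prime_ratio
    {Ω : Type*} [MeasurableSpace Ω] (P : Measure Ω) [IsProbabilityMeasure P]
    (α₁ β₁ lam₁ α₂ β₂ lam₂ : ℝ) (hα₁ : 0 < α₁) (hβ₁ : 0 < β₁) (hlam₁ : 0 < lam₁)
    (hα₂ : 0 < α₂) (hβ₂ : 0 < β₂) (hlam₂ : 0 < lam₂)
    (K : ℝ)
    (hK : K = (Real.Gamma (α₁ + α₂) * Real.Gamma (β₁ + β₂) /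
        Real.Gamma (α₁ + α₂ + β₁ + β₂)) * lam₁ ^ α₁ /
      ((Real.Gamma α₁ * Real.Gamma β₁ / Real.Gamma (α₁ + β₁)) *
       (Real.Gamma α₂ * Real.Gamma β₂ / Real.Gamma (α₂ + β₂)) * lam₂ ^ α₁))
    (X Y : Ω → ℝ) (hXm : Measurable X) (hYm : Measurable Y)
    (hindep : IndepFun X Y P)
    (hXpos : ∀ᵐ ω ∂P, 0 < X ω) (hYpos : ∀ᵐ ω ∂P, 0 < Y ω)
    (hX : P.map X = (volume.restrict (Ioi 0)).withDensity
      (fun x => ENNReal.ofReal (lam₁ ^ α₁ * x ^ (α₁ - 1) *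
        (1 + lam₁ * x) ^ (-(α₁ + β₁)) /
          (Real.Gamma α₁ * Real.Gamma β₁ / Real.Gamma (α₁ + β₁)))))
    (hY : P.map Y = (volume.restrict (Ioi 0)).withDensity
      (fun y => ENNReal.ofReal (lam₂ ^ α₂ * y ^ (α₂ - 1) *
        (1 + lam₂ * y) ^ (-(α₂ + β₂)) /
          (Real.Gamma α₂ * Real.Gamma β₂ / Real.Gamma (α₂ + β₂))))) :
    P.map (fun ω => X ω / (X ω + Y ω)) = (volume.restrict (Ioo 0 1)).withDensity
      (fun z => ENNReal.ofReal (K * (z ^ (α₁ - 1) / (1 - z) ^ (α₁ + 1)) *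
        twoFOne (α₁ + β₁) (α₁ + α₂) (α₁ + α₂ + β₁ + β₂)
          (1 - lam₁ / lam₂ * (z / (1 - z))))) := by
  have hφ : Measurable (fun q : ℝ × ℝ => q.1 / (q.1 + q.2)) :=
    measurable_fst.div (measurable_fst.add measurable_snd)
  have hf₁m : Measurable (fun x : ℝ => ENNReal.ofReal (lam₁ ^ α₁ * x ^ (α₁ - 1) *
      (1 + lam₁ * x) ^ (-(α₁ + β₁)) /
        (Real.Gamma α₁ * Real.Gamma β₁ / Real.Gamma (α₁ + β₁)))) := by
    apply Measurable.ennreal_ofReal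
    exact (((measurable_id.pow_const (α₁-1)).const_mul (lam₁ ^ α₁)).mul
      (((measurable_id.const_mul lam₁).const_add 1).pow_const (-(α₁+β₁)))).div_const _
  have hf₂m : Measurable (fun x : ℝ => ENNReal.ofReal (lam₂ ^ α₂ * x ^ (α₂ - 1) *
      (1 + lam₂ * x) ^ (-(α₂ + β₂)) /
        (Real.Gamma α₂ * Real.Gamma β₂ / Real.Gamma (α₂ + β₂)))) := by
    apply Measurable.ennreal_ofReal
    exact (((measurable_id.pow_const (α₂-1)).const_mul (lam₂ ^ α₂)).mul
      (((measurable_id.const_mul lam₂).const_add 1).pow_const (-(α₂+β₂)))).div_const _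
  haveI i1 : SigmaFinite ((volume.restrict (Ioi (0:ℝ))).withDensity
      (fun x => ENNReal.ofReal (lam₁ ^ α₁ * x ^ (α₁ - 1) *
        (1 + lam₁ * x) ^ (-(α₁ + β₁)) /
          (Real.Gamma α₁ * Real.Gamma β₁ / Real.Gamma (α₁ + β₁))))) := by
    have h : IsProbabilityMeasure (P.map X) := Measure.isProbabilityMeasure_map hXm.aemeasurable
    rw [hX] at h
    haveI := h
    infer_instance
  haveI i2 : SigmaFinite ((volume.restrict (Ioi (0:ℝ))).withDensity
      (fun y => ENNReal.ofReal (lam₂ ^ α₂ * y ^ (α₂ - 1) *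
        (1 + lam₂ * y) ^ (-(α₂ + β₂)) /
          (Real.Gamma α₂ * Real.Gamma β₂ / Real.Gamma (α₂ + β₂))))) := by
    have h : IsProbabilityMeasure (P.map Y) := Measure.isProbabilityMeasure_map hYm.aemeasurable
    rw [hY] at h
    haveI := h
    infer_instance
  have hpair := (ProbabilityTheory.indepFun_iff_map_prod_eq_prod_map_map
    hXm.aemeasurable hYm.aemeasurable).mp hindep
  have hcomp : P.map (fun ω => X ω / (X ω + Y ω))
      = (P.map (fun ω => (X ω, Y ω))).map (fun q : ℝ × ℝ => q.1 / (q.1 + q.2)) := by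
    rw [Measure.map_map hφ (hXm.prodMk hYm)]
    rfl
  rw [hcomp, hpair, hX, hY, myWithDensityProd hf₁m hf₂m]
  refine Measure.ext fun s hs => ?_
  rw [Measure.map_apply hφ hs, withDensity_apply _ (hφ hs)]
  exact main_calc α₁ β₁ lam₁ α₂ β₂ lam₂ K hα₁ hβ₁ hlam₁ hα₂ hβ₂ hlam₂ hK s hs
end

section
/- Let a and b be real numbers with b > a and b > 0, and define ₁F₁(b; b-a; w) = Σ_{n=0}^∞ ((b)_n/(b-a)_n) * (w^n/n!), where (x)_n is the ascending factorial. Then for every s > 0: ∫_0^∞ exp(-s*t) * (1/Γ(b-a)) * t^{b-a-1} * ₁F₁(b; b-a; -t) dt = s^a / (1+s)^b. In other words, the Laplace transform of t ↦ t^{b-a-1} * ₁F₁(b; b-a; -t)/Γ(b-a) at s is s^a * (1+s)^{-b}. -/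
open MeasureTheory Real Set Filter

/-- The confluent hypergeometric function ₁F₁(a; c; w), defined by its power series,
where the Pochhammer (ascending factorial) symbol (x)ₙ = x(x+1)⋯(x+n-1). -/
noncomputable def oneFOne (a c w : ℝ) : ℝ :=
  ∑' n : ℕ, ((∏ i ∈ Finset.range n, (a + (i : ℝ))) /
    (∏ i ∈ Finset.range n, (c + (i : ℝ)))) * w ^ n / (n.factorial : ℝ)

lemma summable_of_rec {f g : ℕ → ℝ} (h : ∀ n, f (n + 1) = f n * g n) {l : ℝ}
    (hl : |l| < 1) (hg : Tendsto g atTop (nhds l)) : Summable f := by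
  set r : ℝ := (|l| + 1) / 2 with hr
  have hr1 : r < 1 := by rw [hr]; linarith
  have hlr : |l| < r := by rw [hr]; linarith
  have hev : ∀ᶠ n in atTop, |g n| < r := (hg.abs).eventually_lt_const hlr
  refine summable_of_ratio_norm_eventually_le hr1 ?_
  filter_upwards [hev] with n hn
  rw [h n, norm_mul]
  have : ‖g n‖ ≤ r := le_of_lt hn
  calc ‖f n‖ * ‖g n‖ ≤ ‖f n‖ * r := by
        exact mul_le_mul_of_nonneg_left this (norm_nonneg _)
    _ = r * ‖f n‖ := mul_comm _ _

lemma tendsto_ratio (α : ℝ) : Tendsto (fun n : ℕ => (α + n) / (n + 1)) atTop (nhds 1) := by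
  have h1 : Tendsto (fun n : ℕ => 1 + (α - 1) * (1 / ((n : ℝ) + 1))) atTop (nhds (1 + (α - 1) * 0)) := by
    exact (tendsto_const_nhds.add (tendsto_const_nhds.mul tendsto_one_div_add_atTop_nhds_zero_nat))
  rw [mul_zero, add_zero] at h1
  refine h1.congr fun n => ?_
  have : (n : ℝ) + 1 ≠ 0 := by positivity
  field_simp
  ring

lemma key_identity_s17 (n : ℕ) (x y : ℝ) :
    ∑ k ∈ Finset.range (n + 1), ((-1 : ℝ) ^ k * (n.choose k : ℝ) *
      (∏ i ∈ Finset.range k, (x + i)) * ∏ i ∈ Finset.Ico k n, (y + i)) =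
    ∏ i ∈ Finset.range n, (y - x + i) := by
  induction n generalizing x y with
  | zero => simp
  | succ n ih =>
    set B : ℕ → ℝ := fun k => ∏ i ∈ Finset.Ico k (n + 1), (y + i) with hB
    set P : ℕ → ℝ := fun k => ∏ i ∈ Finset.range k, (x + i) with hP
    have step1 : ∑ k ∈ Finset.range (n + 2), ((-1 : ℝ) ^ k * ((n+1).choose k : ℝ) * P k * B k)
        = (∑ k ∈ Finset.range (n + 2), ((-1 : ℝ) ^ k * (n.choose k : ℝ) * P k * B k))
          + ∑ j ∈ Finset.range (n + 1), ((-1 : ℝ) ^ (j+1) * (n.choose j : ℝ) * P (j+1) * B (j+1)) := by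
      rw [Finset.sum_range_succ' _ (n+1),
        Finset.sum_range_succ' (fun k => ((-1 : ℝ) ^ k * (n.choose k : ℝ) * P k * B k)) (n+1)]
      have hsplit : ∀ k ∈ Finset.range (n+1),
          ((-1 : ℝ) ^ (k+1) * ((n+1).choose (k+1) : ℝ) * P (k+1) * B (k+1))
          = ((-1 : ℝ) ^ (k+1) * (n.choose (k+1) : ℝ) * P (k+1) * B (k+1))
            + ((-1 : ℝ) ^ (k+1) * (n.choose k : ℝ) * P (k+1) * B (k+1)) := by
        intro k _
        rw [Nat.choose_succ_succ]
        push_cast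
        ring
      rw [Finset.sum_congr rfl hsplit, Finset.sum_add_distrib]
      simp only [Nat.choose_zero_right]
      ring
    -- first sum: top term vanishes, then factor (y+n)
    have step2 : ∑ k ∈ Finset.range (n + 2), ((-1 : ℝ) ^ k * (n.choose k : ℝ) * P k * B k)
        = (y + n) * ∏ i ∈ Finset.range n, (y - x + i) := by
      rw [Finset.sum_range_succ]
      simp only [Nat.choose_succ_self, Nat.cast_zero, mul_zero, zero_mul, mul_zero, add_zero]
      have hBk : ∀ k ∈ Finset.range (n+1), (-1 : ℝ) ^ k * (n.choose k : ℝ) * P k * B k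
          = (y + n) * ((-1 : ℝ) ^ k * (n.choose k : ℝ) * P k * ∏ i ∈ Finset.Ico k n, (y + i)) := by
        intro k hk
        rw [Finset.mem_range] at hk
        have : B k = (∏ i ∈ Finset.Ico k n, (y + i)) * (y + n) :=
          Finset.prod_Ico_succ_top (Nat.lt_succ_iff.mp hk) _
        rw [this]; ring
      rw [Finset.sum_congr rfl hBk, ← Finset.mul_sum, ih x y]
    -- second sum: equals -x * ih (x+1) (y+1)
    have step3 : ∑ j ∈ Finset.range (n + 1), ((-1 : ℝ) ^ (j+1) * (n.choose j : ℝ) * P (j+1) * B (j+1))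
        = -x * ∏ i ∈ Finset.range n, (y - x + i) := by
      have hterm : ∀ j ∈ Finset.range (n+1),
          ((-1 : ℝ) ^ (j+1) * (n.choose j : ℝ) * P (j+1) * B (j+1))
          = -x * ((-1 : ℝ) ^ j * (n.choose j : ℝ) * (∏ i ∈ Finset.range j, ((x+1) + i)) *
              ∏ i ∈ Finset.Ico j n, ((y+1) + i)) := by
        intro j _
        have hPj : P (j+1) = (∏ i ∈ Finset.range j, ((x+1) + i)) * x := by
          show (∏ i ∈ Finset.range (j+1), (x + (i:ℝ))) = _
          rw [Finset.prod_range_succ' (fun i => x + (i : ℝ))]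
          simp only [Nat.cast_add, Nat.cast_zero, add_zero]
          congr 1
          apply Finset.prod_congr rfl
          intro i _
          push_cast
          ring
        have hBj : B (j+1) = ∏ i ∈ Finset.Ico j n, ((y+1) + i) := by
          show (∏ i ∈ Finset.Ico (j+1) (n+1), (y + (i:ℝ))) = _
          rw [Finset.prod_Ico_eq_prod_range, Finset.prod_Ico_eq_prod_range]
          simp only [Nat.add_sub_add_right]
          apply Finset.prod_congr rfl
          intro i _
          push_cast
          ring
        rw [hPj, hBj, pow_succ]
        ring
      rw [Finset.sum_congr rfl hterm, ← Finset.mul_sum, ih (x+1) (y+1)]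
      have : ∀ i ∈ Finset.range n, (y + 1 - (x+1) + (i:ℝ)) = (y - x + i) := by
        intro i _; ring
      rw [Finset.prod_congr rfl this]
    rw [step1, step2, step3, Finset.prod_range_succ]
    push_cast
    ring

lemma prod_pos_c {c : ℝ} (hc : 0 < c) (m : ℕ) : (0:ℝ) < ∏ i ∈ Finset.range m, (c + i) := by
  apply Finset.prod_pos; intro i _; positivity

lemma key_div (n : ℕ) (b c : ℝ) (hc : 0 < c) :
    ∑ k ∈ Finset.range (n + 1), ((-1 : ℝ) ^ k * (n.choose k : ℝ) *
      ((∏ i ∈ Finset.range k, (c - b + i)) / (∏ i ∈ Finset.range k, (c + i)))) =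
    (∏ i ∈ Finset.range n, (b + i)) / (∏ i ∈ Finset.range n, (c + i)) := by
  rw [eq_div_iff (prod_pos_c hc n).ne', Finset.sum_mul]
  have h : ∀ k ∈ Finset.range (n+1), ((-1:ℝ)^k * (n.choose k : ℝ) *
      ((∏ i ∈ Finset.range k, (c - b + i)) / (∏ i ∈ Finset.range k, (c + i)))) *
        (∏ i ∈ Finset.range n, (c + i))
      = (-1:ℝ)^k * (n.choose k : ℝ) * (∏ i ∈ Finset.range k, (c - b + i)) *
        ∏ i ∈ Finset.Ico k n, (c + i) := by
    intro k hk
    rw [Finset.mem_range, Nat.lt_succ_iff] at hk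
    rw [← Finset.prod_range_mul_prod_Ico (fun i => c + (i:ℝ)) hk]
    have := (prod_pos_c hc k).ne'
    field_simp
  rw [Finset.sum_congr rfl h, key_identity_s17]
  apply Finset.prod_congr rfl; intro i _; ring

lemma Gamma_prod {c : ℝ} (hc : 0 < c) (n : ℕ) :
    Real.Gamma (c + n) = (∏ i ∈ Finset.range n, (c + i)) * Real.Gamma c := by
  induction n with
  | zero => simp
  | succ n ih =>
    have h : c + ((n+1 : ℕ) : ℝ) = (c + n) + 1 := by push_cast; ring
    have h2 : (0:ℝ) < c + n := by positivity
    rw [h, Real.Gamma_add_one h2.ne', ih, Finset.prod_range_succ]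
    ring

lemma summable_norm_oneFOne (α c t : ℝ) (hc : 0 < c) :
    Summable (fun n : ℕ => ‖((∏ i ∈ Finset.range n, (α + (i:ℝ))) /
      (∏ i ∈ Finset.range n, (c + (i:ℝ)))) * t ^ n / (n.factorial : ℝ)‖) := by
  apply summable_of_rec (g := fun n : ℕ => ‖(α + n) * t / ((c + n) * ((n:ℝ) + 1))‖)
    (l := 0) ?_ (by norm_num) ?_
  · intro n
    rw [← norm_mul]
    congr 1
    rw [Finset.prod_range_succ, Finset.prod_range_succ, Nat.factorial_succ, pow_succ]
    push_cast
    field_simp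
  · have h1 : Tendsto (fun n : ℕ => (α + n) / ((n:ℝ) + 1) * (t / (c + n))) atTop (nhds (1 * 0)) := by
      refine (tendsto_ratio α).mul ?_
      apply Tendsto.div_atTop tendsto_const_nhds
      exact tendsto_atTop_add_const_left _ c tendsto_natCast_atTop_atTop
    rw [one_mul] at h1
    have h2 := h1.abs
    rw [abs_zero] at h2
    refine h2.congr fun n => ?_
    rw [Real.norm_eq_abs]
    congr 1
    rw [div_mul_div_comm]
    ring

lemma summable_norm_exp (t : ℝ) :
    Summable (fun m : ℕ => ‖(-t) ^ m / (m.factorial : ℝ)‖) := by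
  apply summable_of_rec (g := fun m : ℕ => ‖(-t) / ((m:ℝ) + 1)‖) (l := 0) ?_ (by norm_num) ?_
  · intro m
    rw [← norm_mul]
    congr 1
    have hm : ((m:ℝ) + 1) ≠ 0 := by positivity
    have hf : (m.factorial : ℝ) ≠ 0 := by exact_mod_cast m.factorial_ne_zero
    rw [Nat.factorial_succ, pow_succ]
    push_cast
    rw [div_mul_div_comm]
    ring
  · have h1 : Tendsto (fun m : ℕ => (-t) / ((m:ℝ) + 1)) atTop (nhds 0) := by
      apply Tendsto.div_atTop tendsto_const_nhds
      exact tendsto_atTop_add_const_right _ 1 tendsto_natCast_atTop_atTop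
    have h2 := h1.abs
    rw [abs_zero] at h2
    exact h2.congr fun n => rfl

lemma kummer (b c t : ℝ) (hc : 0 < c) :
    oneFOne b c (-t) = Real.exp (-t) * oneFOne (c - b) c t := by
  have hq := summable_norm_oneFOne (c - b) c t hc
  have he := summable_norm_exp t
  unfold oneFOne
  rw [Real.exp_eq_exp_ℝ, NormedSpace.exp_eq_tsum_div]
  rw [mul_comm]
  rw [tsum_mul_tsum_eq_tsum_sum_antidiagonal_of_summable_norm hq he]
  apply tsum_congr
  intro n
  rw [Finset.Nat.sum_antidiagonal_eq_sum_range_succ_mk]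
  have hterm : ∀ k ∈ Finset.range (n+1),
      ((∏ i ∈ Finset.range k, (c - b + (i:ℝ))) / (∏ i ∈ Finset.range k, (c + (i:ℝ)))) *
        t ^ k / (k.factorial : ℝ) * ((-t) ^ (n - k) / ((n-k).factorial : ℝ))
      = ((-t) ^ n / (n.factorial : ℝ)) * ((-1:ℝ)^k * (n.choose k : ℝ) *
          ((∏ i ∈ Finset.range k, (c - b + (i:ℝ))) / (∏ i ∈ Finset.range k, (c + (i:ℝ))))) := by
    intro k hk
    rw [Finset.mem_range, Nat.lt_succ_iff] at hk
    have h1 : (-t : ℝ) ^ (n - k) = (-1:ℝ)^(n-k) * t^(n-k) := by rw [neg_pow]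
    have h1' : (-t : ℝ) ^ n = (-1:ℝ)^n * t^n := by rw [neg_pow]
    have h2 : t ^ k * t ^ (n-k) = t ^ n := by
      rw [← pow_add, Nat.add_sub_cancel' hk]
    have h3 : (-1:ℝ)^(n-k) * (-1:ℝ)^k = (-1:ℝ)^n := by
      rw [← pow_add, Nat.sub_add_cancel hk]
    have h4 : ((n.choose k : ℝ)) * (k.factorial : ℝ) * ((n-k).factorial : ℝ) = (n.factorial : ℝ) := by
      exact_mod_cast congrArg (Nat.cast : ℕ → ℝ) (Nat.choose_mul_factorial_mul_factorial hk)
    have hk0 : (k.factorial : ℝ) ≠ 0 := by exact_mod_cast k.factorial_ne_zero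
    have hnk0 : ((n-k).factorial : ℝ) ≠ 0 := by exact_mod_cast (n-k).factorial_ne_zero
    have hn0 : (n.factorial : ℝ) ≠ 0 := by exact_mod_cast n.factorial_ne_zero
    have hC0 : (n.choose k : ℝ) ≠ 0 := by
      exact_mod_cast (Nat.choose_pos hk).ne'
    have hBk : (∏ i ∈ Finset.range k, (c + (i:ℝ))) ≠ 0 := (prod_pos_c hc k).ne'
    rw [h1, h1', ← h2, ← h3, ← h4]
    field_simp
    have hsq : ((-1:ℝ)) ^ k * (-1) ^ k = 1 := by
      rw [← pow_add, ← two_mul, pow_mul]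
      norm_num
    linear_combination (-((∏ x ∈ Finset.range k, (c - b + (x:ℝ))) * t ^ k * t ^ (n - k))) * hsq
  rw [Finset.sum_congr rfl hterm, ← Finset.mul_sum, key_div n b c hc]
  ring

lemma binom_rec (α x : ℝ) (n : ℕ) :
    (∏ i ∈ Finset.range (n+1), (α + (i:ℝ))) * x ^ (n+1) / ((n+1).factorial : ℝ)
    = ((∏ i ∈ Finset.range n, (α + (i:ℝ))) * x ^ n / (n.factorial : ℝ)) * ((α + n) * x / ((n:ℝ) + 1)) := by
  have hf : (n.factorial : ℝ) ≠ 0 := by exact_mod_cast n.factorial_ne_zero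
  have hn : ((n:ℝ) + 1) ≠ 0 := by positivity
  rw [Finset.prod_range_succ, Nat.factorial_succ, pow_succ]
  push_cast
  field_simp

lemma summable_binom (α : ℝ) {x : ℝ} (hx : |x| < 1) :
    Summable (fun n : ℕ => (∏ i ∈ Finset.range n, (α + (i:ℝ))) * x ^ n / (n.factorial : ℝ)) := by
  apply summable_of_rec (g := fun n : ℕ => (α + n) * x / ((n:ℝ) + 1)) (l := x) (binom_rec α x) hx
  have h1 : Tendsto (fun n : ℕ => ((α + n) / ((n:ℝ) + 1)) * x) atTop (nhds (1 * x)) :=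
    (tendsto_ratio α).mul_const x
  rw [one_mul] at h1
  refine h1.congr fun n => ?_
  ring

lemma binomial_pos {α x : ℝ} (hα : 0 < α) (hx0 : 0 ≤ x) (hx1 : x < 1) :
    ∑' n : ℕ, (∏ i ∈ Finset.range n, (α + (i:ℝ))) * x ^ n / (n.factorial : ℝ) = (1 - x) ^ (-α) := by
  have h1x : 0 < 1 - x := by linarith
  set F : ℕ → ℝ → ℝ := fun n t => (x ^ n / (n.factorial : ℝ)) * (t ^ (α + n - 1) * Real.exp (-(1 * t))) with hF
  have hint_base : ∀ n : ℕ, IntegrableOn (fun t : ℝ => t ^ (α + n - 1) * Real.exp (-(1 * t))) (Ioi 0) := by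
    intro n
    have := Real.GammaIntegral_convergent (s := α + n) (by positivity)
    refine this.congr_fun (fun t ht => ?_) measurableSet_Ioi
    simp [mul_comm, one_mul]
  have hF_int : ∀ n : ℕ, Integrable (F n) (volume.restrict (Ioi 0)) := fun n =>
    ((hint_base n).const_mul _)
  have hval : ∀ n : ℕ, ∫ t in Ioi (0:ℝ), F n t = x ^ n / (n.factorial : ℝ) * Real.Gamma (α + n) := by
    intro n
    rw [hF]
    simp only
    rw [MeasureTheory.integral_const_mul]
    rw [integral_rpow_mul_exp_neg_mul_Ioi (by positivity : (0:ℝ) < α + n) one_pos]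
    norm_num
  have hnorm : ∀ n : ℕ, ∫ t in Ioi (0:ℝ), ‖F n t‖ = x ^ n / (n.factorial : ℝ) * Real.Gamma (α + n) := by
    intro n
    rw [← hval n]
    refine setIntegral_congr_fun measurableSet_Ioi (fun t ht => ?_)
    rw [Real.norm_eq_abs, abs_of_nonneg]
    have h1 : (0:ℝ) < t ^ (α + n - 1) := rpow_pos_of_pos ht _
    positivity
  have hF_sum : Summable (fun n : ℕ => ∫ t in Ioi (0:ℝ), ‖F n t‖) := by
    simp_rw [hnorm]
    have : ∀ n : ℕ, x ^ n / (n.factorial : ℝ) * Real.Gamma (α + n)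
        = Real.Gamma α * ((∏ i ∈ Finset.range n, (α + (i:ℝ))) * x ^ n / (n.factorial : ℝ)) := by
      intro n
      rw [Gamma_prod hα n]
      ring
    simp_rw [this]
    exact (summable_binom α (by rwa [abs_of_nonneg hx0])).mul_left _
  have hswap := MeasureTheory.integral_tsum_of_summable_integral_norm hF_int hF_sum
  -- evaluate pointwise sum
  have hpt : ∀ t ∈ Ioi (0:ℝ), ∑' n : ℕ, F n t = t ^ (α - 1) * Real.exp (-((1 - x) * t)) := by
    intro t ht
    rw [mem_Ioi] at ht
    have hterm : ∀ n : ℕ, F n t = (t ^ (α - 1) * Real.exp (-t)) * ((x * t) ^ n / (n.factorial : ℝ)) := by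
      intro n
      rw [hF]
      simp only
      have : t ^ (α + n - 1) = t ^ (α - 1) * t ^ (n : ℕ) := by
        rw [← Real.rpow_natCast t n, ← Real.rpow_add ht]
        ring_nf
      rw [this, mul_pow]
      rw [one_mul]
      ring
    rw [tsum_congr hterm, tsum_mul_left]
    have : ∑' n : ℕ, ((x * t) ^ n / (n.factorial : ℝ)) = Real.exp (x * t) := by
      rw [Real.exp_eq_exp_ℝ, NormedSpace.exp_eq_tsum_div]
    rw [this, mul_assoc, ← Real.exp_add]
    ring_nf
  have heval : ∫ t in Ioi (0:ℝ), ∑' n : ℕ, F n t = (1 / (1 - x)) ^ α * Real.Gamma α := by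
    rw [setIntegral_congr_fun measurableSet_Ioi hpt]
    exact integral_rpow_mul_exp_neg_mul_Ioi hα h1x
  rw [heval] at hswap
  simp_rw [hval] at hswap
  have hexp : ∀ n : ℕ, x ^ n / (n.factorial : ℝ) * Real.Gamma (α + n)
      = Real.Gamma α * ((∏ i ∈ Finset.range n, (α + (i:ℝ))) * x ^ n / (n.factorial : ℝ)) := by
    intro n; rw [Gamma_prod hα n]; ring
  rw [tsum_congr hexp, tsum_mul_left] at hswap
  have hΓ : Real.Gamma α ≠ 0 := (Real.Gamma_pos_of_pos hα).ne'
  have := mul_left_cancel₀ hΓ (hswap.trans (mul_comm _ _))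
  rw [this, one_div, ← Real.rpow_neg_one (1-x), ← Real.rpow_mul h1x.le]
  norm_num

lemma binomial_step (α : ℝ) {x : ℝ} (hx0 : 0 ≤ x) (hx1 : x < 1) :
    ∑' n : ℕ, (∏ i ∈ Finset.range n, (α + (i:ℝ))) * x ^ n / (n.factorial : ℝ)
    = (1 - x) * ∑' n : ℕ, (∏ i ∈ Finset.range n, ((α+1) + (i:ℝ))) * x ^ n / (n.factorial : ℝ) := by
  have hxabs : |x| < 1 := by rwa [abs_of_nonneg hx0]
  set f : ℕ → ℝ := fun n => (∏ i ∈ Finset.range n, ((α+1) + (i:ℝ))) * x ^ n / (n.factorial : ℝ) with hfdef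
  have hf : Summable f := summable_binom (α+1) hxabs
  set g : ℕ → ℝ := fun n => match n with | 0 => 0 | (m+1) => x * f m with hgdef
  have hg1 : Summable (fun n : ℕ => g (n + 1)) := by
    simpa using hf.mul_left x
  have hg_s : Summable g := (summable_nat_add_iff 1).mp hg1
  have hkey : ∀ n : ℕ, (∏ i ∈ Finset.range (n+1), (α + (i:ℝ)))
      = (∏ i ∈ Finset.range (n+1), ((α+1) + (i:ℝ))) - ((n:ℝ)+1) * ∏ i ∈ Finset.range n, ((α+1) + (i:ℝ)) := by
    intro n
    rw [Finset.prod_range_succ' (fun i => α + (i:ℝ)), Finset.prod_range_succ]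
    have : ∀ i ∈ Finset.range n, (α + ((i+1 : ℕ) : ℝ)) = ((α+1) + (i:ℝ)) := by
      intro i _; push_cast; ring
    rw [Finset.prod_congr rfl this]
    push_cast
    ring
  have hdecomp : ∀ n : ℕ, (∏ i ∈ Finset.range n, (α + (i:ℝ))) * x ^ n / (n.factorial : ℝ) = f n - g n := by
    intro n
    match n with
    | 0 => simp [hfdef, hgdef]
    | (m+1) =>
      show _ = f (m+1) - x * f m
      rw [hkey m, hfdef]
      simp only
      have hfm : (m.factorial : ℝ) ≠ 0 := by exact_mod_cast m.factorial_ne_zero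
      have hm1 : ((m:ℝ) + 1) ≠ 0 := by positivity
      rw [Nat.factorial_succ, pow_succ]
      push_cast
      field_simp
  rw [tsum_congr hdecomp, hf.tsum_sub hg_s]
  rw [hg_s.tsum_eq_zero_add]
  show ∑' n, f n - (0 + ∑' n : ℕ, x * f n) = _
  rw [tsum_mul_left]
  ring

lemma binomial (α : ℝ) {x : ℝ} (hx0 : 0 ≤ x) (hx1 : x < 1) :
    ∑' n : ℕ, (∏ i ∈ Finset.range n, (α + (i:ℝ))) * x ^ n / (n.factorial : ℝ) = (1 - x) ^ (-α) := by
  have h1x : 0 < 1 - x := by linarith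
  obtain ⟨k, hk⟩ := exists_nat_gt (-α)
  have hk' : 0 < α + k := by linarith
  clear hk
  induction k generalizing α with
  | zero =>
    simp only [Nat.cast_zero, add_zero] at hk'
    exact binomial_pos hk' hx0 hx1
  | succ k ih =>
    have h1 : 0 < (α + 1) + k := by push_cast at hk'; linarith
    rw [binomial_step α hx0 hx1, ih (α+1) h1]
    calc (1 - x) * (1-x) ^ (-(α+1)) = (1-x) ^ (1:ℝ) * (1-x) ^ (-(α+1)) := by rw [Real.rpow_one]
      _ = (1-x) ^ (1 + -(α+1)) := (Real.rpow_add h1x _ _).symm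
      _ = (1-x) ^ (-α) := by ring_nf

lemma summable_binom_norm (α : ℝ) {x : ℝ} (hx : |x| < 1) :
    Summable (fun n : ℕ => ‖(∏ i ∈ Finset.range n, (α + (i:ℝ))) * x ^ n / (n.factorial : ℝ)‖) := by
  refine summable_of_rec (g := fun n : ℕ => ‖(α + n) * x / ((n:ℝ) + 1)‖)
    (fun n => by rw [← norm_mul]; congr 1; exact binom_rec α x n) (l := |x|) (by rwa [abs_abs]) ?_
  have h1 := ((tendsto_ratio α).mul_const x).abs
  rw [one_mul] at h1
  refine h1.congr fun n => ?_
  rw [Real.norm_eq_abs]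
  congr 1
  ring

theorem laplace_transform_oneFOne (a b : ℝ) (hba : a < b) (hb : 0 < b)
    (s : ℝ) (hs : 0 < s) :
    ∫ t in Ioi (0:ℝ), Real.exp (-(s * t)) *
        (1 / Real.Gamma (b - a) * t ^ (b - a - 1) * oneFOne b (b - a) (-t)) =
      s ^ a / (1 + s) ^ b := by
  set c : ℝ := b - a with hcdef
  have hc : 0 < c := by simp [hcdef]; linarith
  have h1s : 0 < 1 + s := by linarith
  set y : ℝ := 1 / (1 + s) with hydef
  have hy0 : 0 < y := by positivity
  have hy1 : y < 1 := by
    rw [hydef, div_lt_one h1s]; linarith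
  have hΓ : Real.Gamma c ≠ 0 := (Real.Gamma_pos_of_pos hc).ne'
  set A : ℕ → ℝ := fun n => ∏ i ∈ Finset.range n, (c - b + (i:ℝ)) with hAdef
  set C : ℕ → ℝ := fun n => ∏ i ∈ Finset.range n, (c + (i:ℝ)) with hCdef
  set F : ℕ → ℝ → ℝ := fun n t =>
    (A n / C n / (Real.Gamma c * (n.factorial : ℝ))) *
      (t ^ (c + (n:ℝ) - 1) * Real.exp (-((1 + s) * t))) with hFdef
  -- pointwise identity on Ioi 0
  have key_pt : ∀ t ∈ Ioi (0:ℝ), Real.exp (-(s * t)) *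
      (1 / Real.Gamma c * t ^ (c - 1) * oneFOne b c (-t)) = ∑' n : ℕ, F n t := by
    intro t ht
    rw [mem_Ioi] at ht
    rw [kummer b c t hc]
    have hsum : ∑' n : ℕ, F n t
        = (Real.exp (-(s * t)) * (1 / Real.Gamma c * t ^ (c - 1) * Real.exp (-t))) *
          ∑' n : ℕ, (A n / C n) * t ^ n / (n.factorial : ℝ) := by
      rw [← tsum_mul_left]
      refine tsum_congr fun n => ?_
      have ht1 : t ^ (c + (n:ℝ) - 1) = t ^ (c - 1) * t ^ (n:ℕ) := by
        rw [← Real.rpow_natCast t n, ← Real.rpow_add ht]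
        ring_nf
      have ht2 : Real.exp (-((1 + s) * t)) = Real.exp (-(s * t)) * Real.exp (-t) := by
        rw [← Real.exp_add]
        ring_nf
      rw [hFdef]
      simp only
      rw [ht1, ht2]
      ring
    rw [hsum]
    show _ = _ * ∑' n : ℕ, (A n / C n) * t ^ n / (n.factorial : ℝ)
    have : oneFOne (c - b) c t = ∑' n : ℕ, (A n / C n) * t ^ n / (n.factorial : ℝ) := rfl
    rw [this]
    ring
  -- integrability
  have hint_base : ∀ n : ℕ, IntegrableOn
      (fun t : ℝ => t ^ (c + (n:ℝ) - 1) * Real.exp (-((1 + s) * t))) (Ioi 0) := by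
    intro n
    have hn0 : (0:ℝ) ≤ n := n.cast_nonneg
    have h := integrableOn_rpow_mul_exp_neg_mul_rpow (p := 1) (s := c + (n:ℝ) - 1) (b := 1 + s)
      (by linarith) one_pos h1s
    refine h.congr_fun (fun t ht => ?_) measurableSet_Ioi
    simp only [Real.rpow_one, neg_mul]
  have hF_int : ∀ n : ℕ, Integrable (F n) (volume.restrict (Ioi 0)) := fun n =>
    (hint_base n).const_mul _
  -- values of the integrals
  have hCpos : ∀ n : ℕ, 0 < C n := fun n => prod_pos_c hc n
  have hval : ∀ n : ℕ, ∫ t in Ioi (0:ℝ), F n t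
      = y ^ c * (A n * y ^ n / (n.factorial : ℝ)) := by
    intro n
    rw [hFdef]
    simp only
    rw [MeasureTheory.integral_const_mul,
      integral_rpow_mul_exp_neg_mul_Ioi (by positivity : (0:ℝ) < c + n) h1s]
    rw [← hydef, Real.rpow_add hy0, Real.rpow_natCast, Gamma_prod hc n,
      show (∏ i ∈ Finset.range n, (c + (i:ℝ))) = C n from rfl]
    have hf : (n.factorial : ℝ) ≠ 0 := by exact_mod_cast n.factorial_ne_zero
    field_simp [(hCpos n).ne']
  -- norms of the integrals
  have hnorm : ∀ n : ℕ, ∫ t in Ioi (0:ℝ), ‖F n t‖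
      = y ^ c * ‖A n * y ^ n / (n.factorial : ℝ)‖ := by
    intro n
    have habs : ∀ t ∈ Ioi (0:ℝ), ‖F n t‖
        = (|A n| / C n / (Real.Gamma c * (n.factorial : ℝ))) *
          (t ^ (c + (n:ℝ) - 1) * Real.exp (-((1 + s) * t))) := by
      intro t ht
      rw [mem_Ioi] at ht
      have h1 : (0:ℝ) < t ^ (c + (n:ℝ) - 1) := rpow_pos_of_pos ht _
      rw [hFdef]
      simp only
      rw [Real.norm_eq_abs, abs_mul, abs_div, abs_div, abs_mul,
        abs_of_pos (hCpos n), abs_of_pos (Real.Gamma_pos_of_pos hc),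
        abs_of_pos (show (0:ℝ) < (n.factorial : ℝ) by exact_mod_cast n.factorial_pos),
        abs_of_pos (mul_pos h1 (Real.exp_pos _))]
    rw [setIntegral_congr_fun measurableSet_Ioi habs, MeasureTheory.integral_const_mul,
      integral_rpow_mul_exp_neg_mul_Ioi (by positivity : (0:ℝ) < c + n) h1s]
    rw [← hydef, Real.rpow_add hy0, Real.rpow_natCast, Gamma_prod hc n,
      show (∏ i ∈ Finset.range n, (c + (i:ℝ))) = C n from rfl]
    have hf : (0:ℝ) < (n.factorial : ℝ) := by exact_mod_cast n.factorial_pos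
    rw [Real.norm_eq_abs, abs_div, abs_mul, abs_of_nonneg (pow_nonneg hy0.le n),
      abs_of_pos hf]
    field_simp [(hCpos n).ne']
  have hF_sum : Summable (fun n : ℕ => ∫ t in Ioi (0:ℝ), ‖F n t‖) := by
    simp_rw [hnorm]
    exact (summable_binom_norm (c - b) (by rwa [abs_of_nonneg hy0.le])).mul_left _
  -- put everything together
  have h1 : ∫ t in Ioi (0:ℝ), Real.exp (-(s * t)) *
      (1 / Real.Gamma c * t ^ (c - 1) * oneFOne b c (-t)) = ∫ t in Ioi (0:ℝ), ∑' n : ℕ, F n t :=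
    setIntegral_congr_fun measurableSet_Ioi key_pt
  rw [h1, ← MeasureTheory.integral_tsum_of_summable_integral_norm hF_int hF_sum]
  rw [tsum_congr hval, tsum_mul_left, binomial (c - b) hy0.le hy1]
  -- final rpow algebra
  have h1y : (1:ℝ) - y = s / (1 + s) := by
    rw [hydef]; field_simp; ring
  rw [h1y, hydef]
  rw [Real.div_rpow hs.le h1s.le, one_div, Real.inv_rpow h1s.le]
  have hab : -(c - b) = a := by rw [hcdef]; ring
  rw [hab]
  have hb' : b = a + c := by rw [hcdef]; ring
  rw [hb', Real.rpow_add h1s]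
  have h2 : (1 + s) ^ a ≠ 0 := (Real.rpow_pos_of_pos h1s a).ne'
  have h3 : (1 + s) ^ c ≠ 0 := (Real.rpow_pos_of_pos h1s c).ne'
  field_simp
end
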